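/- arXiv:2302.04925 — 5 statements merged into one kernel-verified Lean document; each statement's English description precedes it below -/
import Mathlib

section
/- (Fingerprinting Lemma) Let P be uniformly distributed on the interval [−1/3, 1/3], and, conditionally on P = p, let X_1, …, X_m be i.i.d. random variables taking values in {−1, +1} with E[X_i] = p. Then for every function f : {±1}^m → [−1/3, 1/3]: E[ ((1 − 9P²)/(9 − 9P²)) · (f(X_{1:m}) − P) · Σ_{i=1}^m (X_i − P) + (f(X_{1:m}) − P)² ] ≥ 1/27, where the expectation is over P and X_{1:m}. -/
/-!
Write `L_x(p) = ∏ᵢ (1 + xᵢ p) / 2` for the probability of `x` given `P = p`. The score identity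
`(1 - p²) L_x'(p) = L_x(p) ∑ᵢ (xᵢ - p)` turns the integrand into
`∑ₓ ((1/9 - p²)(f x - p) L_x'(p) + L_x(p)(f x - p)²)`. The weight `1/9 - p²` vanishes at `±1/3`,
so integrating by parts turns the integral into `∑ₓ ∫ L_x(p) (f(x)² + 1/9 - 2p²) dp`. Dropping
`f(x)² ≥ 0` and using `∑ₓ L_x = 1` leaves `∫_{-1/3}^{1/3} (1/9 - 2p²) dp = 2/81`, and
`3/2 · 2/81 = 1/27`; the factor `3/2` is the uniform density of `P`.
-/

open Finset Real

noncomputable section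

/-- Encoding of `Bool` as `±1 ∈ ℝ`. -/
def pm1 (b : Bool) : ℝ := if b then 1 else -1

lemma pm1_sq (b : Bool) : pm1 b ^ 2 = 1 := by cases b <;> simp [pm1]

section Likelihood

variable {ι : Type*} [Fintype ι]

def likelihood (p : ℝ) (x : ι → Bool) : ℝ := ∏ i, (1 + pm1 (x i) * p) / 2

lemma sum_likelihood [DecidableEq ι] (p : ℝ) : ∑ x : ι → Bool, likelihood p x = 1 := by
  have hcoord : ∑ b : Bool, (1 + pm1 b * p) / 2 = 1 := by simp [pm1]; ring
  calc ∑ x : ι → Bool, ∏ i, (1 + pm1 (x i) * p) / 2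
      = ∏ _ : ι, ∑ b : Bool, (1 + pm1 b * p) / 2 :=
        (Fintype.prod_sum fun (_ : ι) (b : Bool) => (1 + pm1 b * p) / 2).symm
    _ = 1 := by rw [hcoord, prod_const_one]

lemma likelihood_nonneg {p : ℝ} (hp : p ∈ Set.Icc (-1) 1) (x : ι → Bool) :
    0 ≤ likelihood p x :=
  prod_nonneg fun i _ => by cases x i <;> simp [pm1] <;> linarith [hp.1, hp.2]

@[fun_prop]
lemma contDiff_likelihood (x : ι → Bool) : ContDiff ℝ 1 (likelihood · x) := by
  unfold likelihood
  fun_prop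

@[fun_prop]
lemma continuous_deriv_likelihood (x : ι → Bool) : Continuous (deriv (likelihood · x)) :=
  (contDiff_likelihood x).continuous_deriv le_rfl

lemma one_sub_sq_mul_deriv_likelihood [DecidableEq ι] (p : ℝ) (x : ι → Bool) :
    (1 - p ^ 2) * deriv (likelihood · x) p = likelihood p x * ∑ i, (pm1 (x i) - p) := by
  have hderiv := HasDerivAt.fun_finsetProd (u := univ) (x := p)
    (f := fun i q => (1 + pm1 (x i) * q) / 2) (f' := fun i => pm1 (x i) / 2)
    fun i _ => by simpa using (((hasDerivAt_id p).const_mul (pm1 (x i))).const_add 1).div_const 2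
  rw [show deriv (likelihood · x) p = _ from hderiv.deriv, mul_sum, likelihood, mul_sum]
  refine sum_congr rfl fun i hi => ?_
  rw [← mul_prod_erase univ _ hi, smul_eq_mul]
  -- `(1 - p²) xᵢ = (1 + xᵢ p)(xᵢ - p)` because `xᵢ² = 1`
  linear_combination -(∏ j ∈ univ.erase i, (1 + pm1 (x j) * p) / 2) * p / 2 * pm1_sq (x i)

lemma likelihood_mul_score [DecidableEq ι] {p : ℝ} (hp : 1 - p ^ 2 ≠ 0) (w c : ℝ)
    (x : ι → Bool) :
    likelihood p x * (w / (1 - p ^ 2) * (c - p) * ∑ i, (pm1 (x i) - p)) =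
      w * (c - p) * deriv (likelihood · x) p := by
  calc likelihood p x * (w / (1 - p ^ 2) * (c - p) * ∑ i, (pm1 (x i) - p))
      = w / (1 - p ^ 2) * (c - p) * (likelihood p x * ∑ i, (pm1 (x i) - p)) := by ring
    _ = w * (c - p) * deriv (likelihood · x) p := by
      rw [← one_sub_sq_mul_deriv_likelihood]
      field_simp

end Likelihood

section Integrals

open intervalIntegral

lemma integral_weighted_deriv_add_sq_eq {L : ℝ → ℝ} (hL : ContDiff ℝ 1 L) (r c : ℝ) :
    ∫ p in -r..r, ((r ^ 2 - p ^ 2) * (c - p) * deriv L p + L p * (c - p) ^ 2) =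
      ∫ p in -r..r, L p * (c ^ 2 + r ^ 2 - 2 * p ^ 2) := by
  have hLc : Continuous L := hL.continuous
  have hL'c : Continuous (deriv L) := hL.continuous_deriv le_rfl
  have hweight_deriv : ∀ p, HasDerivAt (fun q => (r ^ 2 - q ^ 2) * (c - q))
      (-(2 * p) * (c - p) - (r ^ 2 - p ^ 2)) p := fun p =>
    (((hasDerivAt_pow 2 p).const_sub (r ^ 2)).fun_mul ((hasDerivAt_id' p).const_sub c)).congr_deriv
      (by norm_num; ring)
  -- the weight `r ^ 2 - p ^ 2` vanishes at `± r`, so integration by parts leaves no boundary term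
  have hparts := integral_mul_deriv_eq_deriv_mul (a := -r) (b := r) (fun p _ => hweight_deriv p)
    (fun p _ => (hL.differentiable one_ne_zero p).hasDerivAt)
    ((by fun_prop : Continuous _).intervalIntegrable _ _) (hL'c.intervalIntegrable _ _)
  rw [integral_add ((by fun_prop : Continuous _).intervalIntegrable _ _)
    ((by fun_prop : Continuous _).intervalIntegrable _ _), hparts]
  simp only [neg_sq, sub_self, zero_mul, zero_sub, neg_add_eq_sub]
  rw [← integral_sub ((by fun_prop : Continuous _).intervalIntegrable _ _)
    ((by fun_prop : Continuous _).intervalIntegrable _ _)]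
  congr 1 with p
  ring

lemma two_mul_pow_three_div_three_le_sum_integral {ι : Type*} [Fintype ι] [DecidableEq ι]
    (c : (ι → Bool) → ℝ) {r : ℝ} (hr₀ : 0 ≤ r) (hr₁ : r ≤ 1) :
    2 * r ^ 3 / 3 ≤ ∑ x : ι → Bool, ∫ p in -r..r,
      ((r ^ 2 - p ^ 2) * (c x - p) * deriv (likelihood · x) p + likelihood p x * (c x - p) ^ 2) := by
  simp only [integral_weighted_deriv_add_sq_eq (contDiff_likelihood _)]
  calc 2 * r ^ 3 / 3 = ∫ p in -r..r, (r ^ 2 - 2 * p ^ 2) := by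
        rw [integral_sub intervalIntegrable_const
          ((by fun_prop : Continuous fun p : ℝ => 2 * p ^ 2).intervalIntegrable _ _)]
        simp only [integral_const_mul, integral_pow, integral_const, smul_eq_mul]
        push_cast
        ring
    _ = ∑ x : ι → Bool, ∫ p in -r..r, likelihood p x * (r ^ 2 - 2 * p ^ 2) := by
        rw [← integral_finsetSum fun x _ => (by fun_prop : Continuous _).intervalIntegrable _ _]
        simp only [← sum_mul, sum_likelihood, one_mul]
    _ ≤ ∑ x : ι → Bool, ∫ p in -r..r, likelihood p x * (c x ^ 2 + r ^ 2 - 2 * p ^ 2) := by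
        refine sum_le_sum fun x _ => integral_mono_on (by linarith)
          ((by fun_prop : Continuous _).intervalIntegrable _ _)
          ((by fun_prop : Continuous _).intervalIntegrable _ _) fun p hp => ?_
        have hp₁ : p ∈ Set.Icc (-1) 1 := ⟨by linarith [hp.1], by linarith [hp.2]⟩
        exact mul_le_mul_of_nonneg_left (by nlinarith [sq_nonneg (c x)])
          (likelihood_nonneg hp₁ x)

end Integrals

theorem fingerprinting_lemma_general (m : ℕ) (f : (Fin m → Bool) → ℝ) :
    (3 / 2 : ℝ) *
        ∫ p in (-(1 / 3) : ℝ)..(1 / 3),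
          ∑ x : Fin m → Bool,
            (∏ i, (1 + pm1 (x i) * p) / 2) *
              ((1 - 9 * p ^ 2) / (9 - 9 * p ^ 2) * (f x - p) * (∑ i, (pm1 (x i) - p)) +
                (f x - p) ^ 2) ≥
      1 / 27 := by
  have hweight (p : ℝ) : (1 - 9 * p ^ 2) / (9 - 9 * p ^ 2) = ((1 / 3) ^ 2 - p ^ 2) / (1 - p ^ 2) := by
    rw [show (9 : ℝ) - 9 * p ^ 2 = 9 * (1 - p ^ 2) by ring,
      show (1 : ℝ) - 9 * p ^ 2 = 9 * ((1 / 3) ^ 2 - p ^ 2) by ring,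
      mul_div_mul_left _ _ (by norm_num)]
  have hintegrand : Set.EqOn
      (fun p => ∑ x : Fin m → Bool, (∏ i, (1 + pm1 (x i) * p) / 2) *
        ((1 - 9 * p ^ 2) / (9 - 9 * p ^ 2) * (f x - p) * (∑ i, (pm1 (x i) - p)) + (f x - p) ^ 2))
      (fun p => ∑ x : Fin m → Bool, (((1 / 3) ^ 2 - p ^ 2) * (f x - p) *
        deriv (likelihood · x) p + likelihood p x * (f x - p) ^ 2))
      (Set.uIcc (-(1 / 3)) (1 / 3)) := fun p hp => by
    rw [Set.uIcc_of_le (by norm_num)] at hp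
    have hp₁ : 1 - p ^ 2 ≠ 0 := by nlinarith [hp.1, hp.2]
    refine sum_congr rfl fun x _ => ?_
    rw [hweight, mul_add, ← likelihood_mul_score hp₁]
    rfl
  rw [intervalIntegral.integral_congr hintegrand, intervalIntegral.integral_finsetSum
    fun x _ => (by fun_prop : Continuous _).intervalIntegrable _ _]
  have hbound := two_mul_pow_three_div_three_le_sum_integral f (r := 1 / 3) (by norm_num)
    (by norm_num)
  linarith

/-- **Fingerprinting Lemma.** -/
theorem fingerprinting_lemma (m : ℕ) (f : (Fin m → Bool) → ℝ)
    (hf : ∀ x, f x ∈ Set.Icc (-(1 / 3) : ℝ) (1 / 3)) :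
    (3 / 2 : ℝ) *
        ∫ p in (-(1 / 3) : ℝ)..(1 / 3),
          ∑ x : Fin m → Bool,
            (∏ i, (1 + pm1 (x i) * p) / 2) *
              ((1 - 9 * p ^ 2) / (9 - 9 * p ^ 2) * (f x - p) * (∑ i, (pm1 (x i) - p)) +
                (f x - p) ^ 2) ≥
      1 / 27 :=
  fingerprinting_lemma_general m f

end
end

section
/- Let X and Y be discrete random variables on a common probability space with E[X] = 0, E[Y²] ≤ 1, and E[XY] = β > 0, and suppose X is sub-Gaussian with tail bound P(|X| ≥ t) ≤ 2e^{−t²/c²} for all t ≥ 0, for some c ≥ β. Then the mutual information satisfies √(I(X;Y)) ≥ β² / (192√2 · c² · ln(2^20 c²/β²)); in particular I(X;Y) = Ω̃(β⁴/c⁴). -/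
/-!
Truncate both variables: with `L = log (2²⁰ c² / β²)`, `T = c √(2L)` and `M = 8T/β`, the bounded
function `clamp T x * clamp M y` still has covariance at least `β/2`. Indeed the sub-Gaussian tail
gives `E (X - clamp T X)² ≤ 8 T² e^{-2L} ≤ (β/32)²` (a layer-cake sum over the levels `(k+1) T²`),
and `E Y² ≤ 1` bounds the error of truncating `Y` by `T/M = β/8`. On the other hand, the
covariance of a function bounded by `TM` is at most `TM` times the total variation distance
between the joint law and the product of the marginals, which Pinsker's inequality bounds by
`√(2 I(X;Y))`.
-/

open Finset Real

open scoped Classical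

noncomputable section

/-- Mutual information `I(X;Y)` between the (discrete) random variables `X` and `Y`
defined on a finite sample space `Ω` endowed with a probability mass function `μ`. -/
def miFin {Ω 𝒳 𝒴 : Type*} [Fintype Ω] (μ : Ω → ℝ) (X : Ω → 𝒳) (Y : Ω → 𝒴) : ℝ := by
  classical
  exact ∑ x ∈ Finset.univ.image X, ∑ y ∈ Finset.univ.image Y,
    (∑ ω ∈ Finset.univ.filter (fun ω => X ω = x ∧ Y ω = y), μ ω) *
      Real.log ((∑ ω ∈ Finset.univ.filter (fun ω => X ω = x ∧ Y ω = y), μ ω) /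
        ((∑ ω ∈ Finset.univ.filter (fun ω => X ω = x), μ ω) *
          (∑ ω ∈ Finset.univ.filter (fun ω => Y ω = y), μ ω)))

lemma hasDerivAt_add_one_mul_log_sub {x : ℝ} (hx : 0 < x) :
    HasDerivAt (fun y => (y + 1) * log y - 2 * (y - 1)) (log x + x⁻¹ - 1) x := by
  have h : HasDerivAt (fun y => (y + 1) * log y - 2 * (y - 1))
      (1 * log x + (x + 1) * x⁻¹ - 2 * 1) x :=
    (((hasDerivAt_id x).add_const 1).mul (hasDerivAt_log hx.ne')).sub
      (((hasDerivAt_id x).sub_const 1).const_mul 2)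
  exact h.congr_deriv (by field_simp; ring)

lemma monotoneOn_add_one_mul_log_sub :
    MonotoneOn (fun y => (y + 1) * log y - 2 * (y - 1)) (Set.Ioi 0) :=
  monotoneOn_of_hasDerivWithinAt_nonneg (convex_Ioi 0)
    (fun _ hx => (hasDerivAt_add_one_mul_log_sub hx).continuousAt.continuousWithinAt)
    (fun _ hx => (hasDerivAt_add_one_mul_log_sub (interior_subset hx)).hasDerivWithinAt)
    (fun x hx => by linarith [one_sub_inv_le_log_of_pos (interior_subset hx : (0:ℝ) < x)])

lemma hasDerivAt_add_two_mul_sub_mul_sq {x : ℝ} (hx : 0 < x) :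
    HasDerivAt (fun y => (y + 2) * (y * log y - y + 1) - 3 / 2 * (y - 1) ^ 2)
      (2 * ((x + 1) * log x - 2 * (x - 1))) x := by
  have h : HasDerivAt (fun y => (y + 2) * (y * log y - y + 1) - 3 / 2 * (y - 1) ^ 2)
      (1 * (x * log x - x + 1) + (x + 2) * (log x + 1 - 1) - 3 / 2 * (2 * (x - 1) ^ 1 * 1)) x :=
    (((hasDerivAt_id x).add_const 2).mul
      (((hasDerivAt_mul_log hx.ne').sub (hasDerivAt_id x)).add_const 1)).sub
    ((((hasDerivAt_id x).sub_const 1).pow 2).const_mul (3 / 2 : ℝ))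
  exact h.congr_deriv (by ring)

lemma three_halves_mul_sq_sub_one_le {x : ℝ} (hx : 0 ≤ x) :
    3 / 2 * (x - 1) ^ 2 ≤ (x + 2) * (x * log x - x + 1) := by
  rcases hx.eq_or_lt with rfl | hx
  · norm_num
  have hderiv : ∀ y : ℝ, 0 < y → _ := fun y hy => hasDerivAt_add_two_mul_sub_mul_sq hy
  have hmin := isMinOn_Ioi_of_deriv (a := 0) (b := 1)
    (f := fun y => (y + 2) * (y * log y - y + 1) - 3 / 2 * (y - 1) ^ 2)
    (hderiv 1 one_pos).continuousAt
    (fun y hy => (hderiv y hy.1).differentiableAt.differentiableWithinAt)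
    (fun y hy => (hderiv y (one_pos.trans hy)).differentiableAt.differentiableWithinAt)
    (fun y hy => by
      rw [(hderiv y hy.1).deriv]
      have := monotoneOn_add_one_mul_log_sub hy.1 (Set.mem_Ioi.2 one_pos) hy.2.le
      simp only [log_one] at this
      linarith)
    (fun y hy => by
      rw [(hderiv y (one_pos.trans hy)).deriv]
      have := monotoneOn_add_one_mul_log_sub (Set.mem_Ioi.2 one_pos)
        (Set.mem_Ioi.2 (one_pos.trans hy)) hy.le
      simp only [log_one] at this
      linarith)
  have := isMinOn_iff.1 hmin x hx
  simp only [log_one] at this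
  linarith

lemma sq_sub_le_mul_mul_log_div_sub_add {p q : ℝ} (hp : 0 ≤ p) (hq : 0 ≤ q)
    (hpq : q = 0 → p = 0) :
    (p - q) ^ 2 ≤ (p + 2 * q) * (2 / 3 * (p * log (p / q) - p + q)) := by
  rcases hq.eq_or_lt with rfl | hq
  · simp [hpq rfl]
  have h := mul_le_mul_of_nonneg_left (three_halves_mul_sq_sub_one_le (div_nonneg hp hq.le))
    (sq_nonneg q)
  have e1 : q ^ 2 * (3 / 2 * (p / q - 1) ^ 2) = 3 / 2 * (p - q) ^ 2 := by field_simp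
  have e2 : q ^ 2 * ((p / q + 2) * (p / q * log (p / q) - p / q + 1))
      = (p + 2 * q) * (p * log (p / q) - p + q) := by field_simp
  rw [e1, e2] at h
  linarith

/- Pinsker's inequality: Cauchy–Schwarz against the weights `p + 2q`, which sum to `3`. -/
theorem sq_sum_abs_sub_le_two_mul_sum_mul_log_div {ι : Type*} (s : Finset ι) {p q : ι → ℝ}
    (hp : ∀ i ∈ s, 0 ≤ p i) (hq : ∀ i ∈ s, 0 ≤ q i) (hpq : ∀ i ∈ s, q i = 0 → p i = 0)
    (hp1 : ∑ i ∈ s, p i = 1) (hq1 : ∑ i ∈ s, q i = 1) :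
    (∑ i ∈ s, |p i - q i|) ^ 2 ≤ 2 * ∑ i ∈ s, p i * log (p i / q i) := by
  have hterm : ∀ i ∈ s, |p i - q i| ^ 2 ≤
      (p i + 2 * q i) * (2 / 3 * (p i * log (p i / q i) - p i + q i)) := fun i hi => by
    rw [sq_abs]; exact sq_sub_le_mul_mul_log_div_sub_add (hp i hi) (hq i hi) (hpq i hi)
  have hweight : ∀ i ∈ s, 0 ≤ p i + 2 * q i := fun i hi => by linarith [hp i hi, hq i hi]
  have hgap : ∀ i ∈ s, 0 ≤ 2 / 3 * (p i * log (p i / q i) - p i + q i) := fun i hi => by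
    rcases (hweight i hi).eq_or_lt with h0 | h0
    · have hq0 : q i = 0 := by linarith [hp i hi, hq i hi]
      simp [hq0, hpq i hi hq0]
    · exact nonneg_of_mul_nonneg_right ((sq_nonneg _).trans (hterm i hi)) h0
  calc (∑ i ∈ s, |p i - q i|) ^ 2
      ≤ (∑ i ∈ s, (p i + 2 * q i)) * ∑ i ∈ s, 2 / 3 * (p i * log (p i / q i) - p i + q i) :=
        sum_sq_le_sum_mul_sum_of_sq_le_mul s hweight hgap hterm
    _ = 2 * ∑ i ∈ s, p i * log (p i / q i) := by
        simp only [← mul_sum, sum_add_distrib, sum_sub_distrib, hp1, hq1]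
        ring

section Law

variable {Ω α : Type*} [Fintype Ω]

def lawMass (μ : Ω → ℝ) (Z : Ω → α) (a : α) : ℝ := ∑ ω ∈ univ.filter (fun ω => Z ω = a), μ ω

variable {μ : Ω → ℝ}

lemma lawMass_nonneg (hμ0 : ∀ ω, 0 ≤ μ ω) (Z : Ω → α) (a : α) : 0 ≤ lawMass μ Z a :=
  sum_nonneg fun ω _ => hμ0 ω

lemma lawMass_le_lawMass_comp {β : Type*} (hμ0 : ∀ ω, 0 ≤ μ ω) (Z : Ω → α) (g : α → β) (a : α) :
    lawMass μ Z a ≤ lawMass μ (g ∘ Z) (g a) :=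
  sum_le_sum_of_subset_of_nonneg (monotone_filter_right _ fun _ _ h => congrArg g h)
    fun ω _ _ => hμ0 ω

lemma sum_lawMass_mul {s : Finset α} {Z : Ω → α} (hZ : ∀ ω, Z ω ∈ s) (F : α → ℝ) :
    ∑ a ∈ s, lawMass μ Z a * F a = ∑ ω, μ ω * F (Z ω) := by
  rw [← sum_fiberwise_of_maps_to (fun ω _ => hZ ω)]
  refine sum_congr rfl fun a _ => ?_
  rw [lawMass, sum_mul]
  exact sum_congr rfl fun ω hω => by rw [(mem_filter.1 hω).2]

lemma sum_lawMass {s : Finset α} {Z : Ω → α} (hZ : ∀ ω, Z ω ∈ s) :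
    ∑ a ∈ s, lawMass μ Z a = ∑ ω, μ ω := by
  simpa using sum_lawMass_mul (μ := μ) hZ (fun _ => 1)

end Law

section MutualInformation

variable {Ω 𝒳 𝒴 : Type*} [Fintype Ω] {μ : Ω → ℝ} {X : Ω → 𝒳} {Y : Ω → 𝒴}

lemma miFin_eq_sum_lawMass :
    miFin μ X Y = ∑ z ∈ univ.image X ×ˢ univ.image Y,
      lawMass μ (fun ω => (X ω, Y ω)) z *
        log (lawMass μ (fun ω => (X ω, Y ω)) z / (lawMass μ X z.1 * lawMass μ Y z.2)) := by
  simp only [miFin, sum_product, lawMass, Prod.mk.injEq]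

lemma sq_sum_abs_lawMass_sub_le_two_mul_miFin (hμ0 : ∀ ω, 0 ≤ μ ω) (hμ1 : ∑ ω, μ ω = 1) :
    (∑ z ∈ univ.image X ×ˢ univ.image Y,
      |lawMass μ (fun ω => (X ω, Y ω)) z - lawMass μ X z.1 * lawMass μ Y z.2|) ^ 2 ≤
      2 * miFin μ X Y := by
  have hX : ∀ ω, X ω ∈ univ.image X := fun ω => mem_image_of_mem X (mem_univ ω)
  have hY : ∀ ω, Y ω ∈ univ.image Y := fun ω => mem_image_of_mem Y (mem_univ ω)
  rw [miFin_eq_sum_lawMass]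
  refine sq_sum_abs_sub_le_two_mul_sum_mul_log_div _
    (fun z _ => lawMass_nonneg hμ0 _ z)
    (fun z _ => mul_nonneg (lawMass_nonneg hμ0 X z.1) (lawMass_nonneg hμ0 Y z.2))
    (fun z _ hz => ?_) ?_ ?_
  · rcases mul_eq_zero.1 hz with h | h
    · exact le_antisymm ((lawMass_le_lawMass_comp hμ0 _ Prod.fst z).trans_eq h)
        (lawMass_nonneg hμ0 _ z)
    · exact le_antisymm ((lawMass_le_lawMass_comp hμ0 _ Prod.snd z).trans_eq h)
        (lawMass_nonneg hμ0 _ z)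
  · rw [sum_lawMass fun ω => mem_product.2 ⟨hX ω, hY ω⟩, hμ1]
  · rw [sum_product, ← sum_mul_sum, sum_lawMass hX, sum_lawMass hY, hμ1, one_mul]

theorem sq_sum_mul_sub_mul_le_two_mul_miFin (hμ0 : ∀ ω, 0 ≤ μ ω) (hμ1 : ∑ ω, μ ω = 1)
    {f : 𝒳 → ℝ} {g : 𝒴 → ℝ} {a b : ℝ} (hf : ∀ x, |f x| ≤ a) (hg : ∀ y, |g y| ≤ b) :
    (∑ ω, μ ω * (f (X ω) * g (Y ω)) - (∑ ω, μ ω * f (X ω)) * ∑ ω, μ ω * g (Y ω)) ^ 2 ≤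
      2 * a ^ 2 * b ^ 2 * miFin μ X Y := by
  have hX : ∀ ω, X ω ∈ univ.image X := fun ω => mem_image_of_mem X (mem_univ ω)
  have hY : ∀ ω, Y ω ∈ univ.image Y := fun ω => mem_image_of_mem Y (mem_univ ω)
  set P := lawMass μ (fun ω => (X ω, Y ω))
  set Q : 𝒳 × 𝒴 → ℝ := fun z => lawMass μ X z.1 * lawMass μ Y z.2
  have hcov : ∑ ω, μ ω * (f (X ω) * g (Y ω)) - (∑ ω, μ ω * f (X ω)) * ∑ ω, μ ω * g (Y ω) =
      ∑ z ∈ univ.image X ×ˢ univ.image Y, (P z - Q z) * (f z.1 * g z.2) := by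
    have hP : ∑ z ∈ univ.image X ×ˢ univ.image Y, P z * (f z.1 * g z.2) =
        ∑ ω, μ ω * (f (X ω) * g (Y ω)) :=
      sum_lawMass_mul (fun ω => mem_product.2 ⟨hX ω, hY ω⟩) _
    rw [← sum_lawMass_mul hX, ← sum_lawMass_mul hY, sum_mul_sum, ← hP, ← sum_product',
      ← sum_sub_distrib]
    exact sum_congr rfl fun z _ => by ring
  have habs : |∑ z ∈ univ.image X ×ˢ univ.image Y, (P z - Q z) * (f z.1 * g z.2)| ≤
      a * b * ∑ z ∈ univ.image X ×ˢ univ.image Y, |P z - Q z| := by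
    rw [mul_sum]
    refine (abs_sum_le_sum_abs _ _).trans (sum_le_sum fun z _ => ?_)
    rw [abs_mul, abs_mul, mul_comm (a * b)]
    exact mul_le_mul_of_nonneg_left
      (mul_le_mul (hf z.1) (hg z.2) (abs_nonneg _) ((abs_nonneg _).trans (hf z.1))) (abs_nonneg _)
  rw [hcov, ← sq_abs]
  calc |∑ z ∈ univ.image X ×ˢ univ.image Y, (P z - Q z) * (f z.1 * g z.2)| ^ 2
      ≤ (a * b * ∑ z ∈ univ.image X ×ˢ univ.image Y, |P z - Q z|) ^ 2 :=
        pow_le_pow_left₀ (abs_nonneg _) habs 2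
    _ = a ^ 2 * b ^ 2 * (∑ z ∈ univ.image X ×ˢ univ.image Y, |P z - Q z|) ^ 2 := by ring
    _ ≤ a ^ 2 * b ^ 2 * (2 * miFin μ X Y) :=
        mul_le_mul_of_nonneg_left (sq_sum_abs_lawMass_sub_le_two_mul_miFin hμ0 hμ1) (by positivity)
    _ = 2 * a ^ 2 * b ^ 2 * miFin μ X Y := by ring


lemma le_sqrt_miFin_of_le_sum_mul_sub_mul (hμ0 : ∀ ω, 0 ≤ μ ω) (hμ1 : ∑ ω, μ ω = 1)
    {f : 𝒳 → ℝ} {g : 𝒴 → ℝ} {a b δ : ℝ} (ha : 0 < a) (hb : 0 < b)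
    (hf : ∀ x, |f x| ≤ a) (hg : ∀ y, |g y| ≤ b) (hδ : 0 ≤ δ)
    (hcov : δ ≤ ∑ ω, μ ω * (f (X ω) * g (Y ω)) -
      (∑ ω, μ ω * f (X ω)) * ∑ ω, μ ω * g (Y ω)) :
    δ / (√2 * a * b) ≤ √(miFin μ X Y) := by
  have h := (pow_le_pow_left₀ hδ hcov 2).trans (sq_sum_mul_sub_mul_le_two_mul_miFin hμ0 hμ1 hf hg)
  apply le_sqrt_of_sq_le
  rw [div_pow, div_le_iff₀ (by positivity), mul_pow, mul_pow, sq_sqrt zero_le_two]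
  linarith

end MutualInformation

def clamp (a u : ℝ) : ℝ := max (-a) (min a u)

section Clamp

variable {a : ℝ}

lemma abs_sub_clamp (ha : 0 ≤ a) (u : ℝ) : |u - clamp a u| = max (|u| - a) 0 := by
  unfold clamp
  rcases le_total u (-a) with h | h
  · rw [min_eq_right (by linarith), max_eq_left h, abs_of_nonpos (by linarith),
      abs_of_nonpos (by linarith), max_eq_left (by linarith)]
    ring
  rcases le_total u a with h' | h'
  · rw [min_eq_right h', max_eq_right h, sub_self, abs_zero, max_eq_right]
    exact sub_nonpos.2 (abs_le.2 ⟨h, h'⟩)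
  · rw [min_eq_left h', max_eq_right (by linarith), abs_of_nonneg (by linarith),
      abs_of_nonneg (by linarith), max_eq_left (by linarith)]

lemma abs_clamp_le (ha : 0 ≤ a) (u : ℝ) : |clamp a u| ≤ a :=
  abs_le.2 ⟨le_max_left _ _, max_le (by linarith) (min_le_left _ _)⟩

lemma abs_clamp_le_abs (ha : 0 ≤ a) (u : ℝ) : |clamp a u| ≤ |u| := by
  have h := abs_sub_clamp ha u
  rcases le_total a |u| with hu | hu
  · exact (abs_clamp_le ha u).trans hu
  · rw [max_eq_right (sub_nonpos.2 hu), abs_eq_zero, sub_eq_zero] at h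
    rw [← h]

lemma abs_sub_clamp_le_sq_div (ha : 0 < a) (u : ℝ) : |u - clamp a u| ≤ u ^ 2 / a := by
  rw [abs_sub_clamp ha.le, le_div_iff₀ ha, ← sq_abs u]
  rcases le_total a |u| with hu | hu
  · rw [max_eq_left (sub_nonneg.2 hu)]
    nlinarith
  · rw [max_eq_right (sub_nonpos.2 hu), zero_mul]
    positivity

lemma sq_sub_clamp_le (ha : 0 ≤ a) (u : ℝ) :
    (u - clamp a u) ^ 2 ≤ if a ^ 2 ≤ u ^ 2 then u ^ 2 else 0 := by
  rw [← sq_abs (u - clamp a u), abs_sub_clamp ha]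
  split_ifs with hu <;> rw [← sq_abs u, sq_le_sq₀ ha (abs_nonneg u)] at *
  · rw [max_eq_left (by linarith)]
    exact pow_le_pow_left₀ (by linarith) (by linarith) 2
  · rw [max_eq_right (by linarith)]
    norm_num

end Clamp

/- With `m = ⌊z / s⌋ ≥ 1`, the first `m` levels lie below `z` and `z < (m + 1) s ≤ 2 m s`. -/
lemma le_two_mul_mul_card_filter {s z : ℝ} (hs : 0 < s) (hsz : s ≤ z) {N : ℕ}
    (hzN : z ≤ N * s) : z ≤ 2 * s * #((range N).filter fun k : ℕ => (k + 1) * s ≤ z) := by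
  set m := ⌊z / s⌋₊
  have hm : 1 ≤ m := Nat.le_floor (by rw [Nat.cast_one, le_div_iff₀ hs]; linarith)
  have hmN : m ≤ N := Nat.floor_le_of_le (by rwa [div_le_iff₀ hs])
  have hsub : range m ⊆ (range N).filter fun k : ℕ => (k + 1) * s ≤ z := fun k hk => by
    have hk : k + 1 ≤ m := mem_range.1 hk
    refine mem_filter.2 ⟨mem_range.2 (by omega), ?_⟩
    rw [← le_div_iff₀ hs]
    exact_mod_cast (Nat.le_floor_iff (div_nonneg (hs.le.trans hsz) hs.le)).1 hk
  have hcard : (m : ℝ) ≤ #((range N).filter fun k : ℕ => (k + 1) * s ≤ z) := by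
    exact_mod_cast (card_range m).symm.le.trans (card_le_card hsub)
  have hlt : z < (m + 1) * s := (div_lt_iff₀ hs).1 (Nat.lt_floor_add_one (z / s))
  have hm' : (1 : ℝ) ≤ m := by exact_mod_cast hm
  nlinarith

lemma sum_range_pow_succ_le_two_mul {r : ℝ} (hr0 : 0 ≤ r) (hr : r ≤ 1 / 2) (N : ℕ) :
    ∑ k ∈ range N, r ^ (k + 1) ≤ 2 * r := by
  have h := geom_sum_Ico_le_of_lt_one (m := 0) (n := N) hr0 (by linarith)
  rw [← range_eq_Ico, pow_zero] at h
  simp only [pow_succ, ← sum_mul]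
  refine mul_le_mul_of_nonneg_right (h.trans ?_) hr0
  rw [div_le_iff₀ (by linarith)]
  linarith

lemma log_two_pow_mul_sq_div_sq_pos {β c : ℝ} (hβ : 0 < β) (hβc : β ≤ c) :
    0 < log (2 ^ 20 * c ^ 2 / β ^ 2) :=
  log_pos ((one_lt_div (by positivity)).2 (by nlinarith [pow_le_pow_left₀ hβ.le hβc 2]))

section WeightedSums

variable {Ω : Type*} [Fintype Ω] {μ : Ω → ℝ}

lemma sum_mul_ite_le_two_mul_sum_sum_filter (hμ0 : ∀ ω, 0 ≤ μ ω) (Z : Ω → ℝ) {s : ℝ}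
    (hs : 0 < s) {N : ℕ} (hN : ∀ ω, Z ω ≤ N * s) :
    ∑ ω, μ ω * (if s ≤ Z ω then Z ω else 0) ≤
      2 * s * ∑ k ∈ range N, ∑ ω ∈ univ.filter (fun ω => (k + 1) * s ≤ Z ω), μ ω := by
  simp only [sum_filter]
  rw [sum_comm, mul_sum]
  refine sum_le_sum fun ω _ => ?_
  rw [← sum_filter, sum_const, nsmul_eq_mul, ← mul_assoc, mul_comm _ (μ ω)]
  refine mul_le_mul_of_nonneg_left ?_ (hμ0 ω)
  split_ifs with hsz
  · exact le_two_mul_mul_card_filter hs hsz (hN ω)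
  · positivity

theorem sum_mul_sq_sub_clamp_le_of_tail (hμ0 : ∀ ω, 0 ≤ μ ω) {X : Ω → ℝ} {c T : ℝ}
    (hT : 0 < T) (hr : exp (-T ^ 2 / c ^ 2) ≤ 1 / 2)
    (htail : ∀ t : ℝ, 0 ≤ t →
      ∑ ω ∈ univ.filter (fun ω => t ≤ |X ω|), μ ω ≤ 2 * exp (-t ^ 2 / c ^ 2)) :
    ∑ ω, μ ω * (X ω - clamp T (X ω)) ^ 2 ≤ 8 * T ^ 2 * exp (-T ^ 2 / c ^ 2) := by
  set r := exp (-T ^ 2 / c ^ 2)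
  have hT2 : 0 < T ^ 2 := by positivity
  obtain ⟨N, hN⟩ := Finite.exists_le fun ω => ⌈X ω ^ 2 / T ^ 2⌉₊
  have hXN : ∀ ω, X ω ^ 2 ≤ N * T ^ 2 := fun ω => by
    rw [← div_le_iff₀ hT2]
    exact (Nat.le_ceil _).trans (by exact_mod_cast hN ω)
  have hlevel : ∀ k : ℕ,
      ∑ ω ∈ univ.filter (fun ω => (k + 1) * T ^ 2 ≤ X ω ^ 2), μ ω ≤ 2 * r ^ (k + 1) := by
    intro k
    have ht : 0 ≤ (k + 1) * T ^ 2 := by positivity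
    have hevent : ∀ ω, (k + 1) * T ^ 2 ≤ X ω ^ 2 ↔ √((k + 1) * T ^ 2) ≤ |X ω| := fun ω => by
      rw [← sqrt_sq_eq_abs, sqrt_le_sqrt_iff (sq_nonneg _)]
    have hexp : exp (-√((k + 1) * T ^ 2) ^ 2 / c ^ 2) = r ^ (k + 1) := by
      rw [sq_sqrt ht, ← exp_nat_mul]
      push_cast
      ring_nf
    have h := htail _ (sqrt_nonneg ((k + 1) * T ^ 2))
    rw [hexp] at h
    simpa only [hevent] using h
  calc ∑ ω, μ ω * (X ω - clamp T (X ω)) ^ 2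
      ≤ ∑ ω, μ ω * (if T ^ 2 ≤ X ω ^ 2 then X ω ^ 2 else 0) :=
        sum_le_sum fun ω _ => mul_le_mul_of_nonneg_left (sq_sub_clamp_le hT.le _) (hμ0 ω)
    _ ≤ 2 * T ^ 2 * ∑ k ∈ range N, ∑ ω ∈ univ.filter (fun ω => (k + 1) * T ^ 2 ≤ X ω ^ 2), μ ω :=
        sum_mul_ite_le_two_mul_sum_sum_filter hμ0 _ hT2 hXN
    _ ≤ 2 * T ^ 2 * ∑ k ∈ range N, 2 * r ^ (k + 1) :=
        mul_le_mul_of_nonneg_left (sum_le_sum fun k _ => hlevel k) (by positivity)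
    _ ≤ 8 * T ^ 2 * r := by
        rw [← mul_sum]
        nlinarith [sum_range_pow_succ_le_two_mul (exp_pos _).le hr N]

lemma abs_sum_mul_mul_le_of_sum_mul_sq_le (hμ0 : ∀ ω, 0 ≤ μ ω) {u v : Ω → ℝ} {A B : ℝ}
    (hA : 0 ≤ A) (hB : 0 ≤ B) (hu : ∑ ω, μ ω * u ω ^ 2 ≤ A ^ 2)
    (hv : ∑ ω, μ ω * v ω ^ 2 ≤ B ^ 2) : |∑ ω, μ ω * (u ω * v ω)| ≤ A * B := by
  refine abs_le_of_sq_le_sq ?_ (mul_nonneg hA hB)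
  calc (∑ ω, μ ω * (u ω * v ω)) ^ 2
      ≤ (∑ ω, μ ω * u ω ^ 2) * ∑ ω, μ ω * v ω ^ 2 :=
        sum_sq_le_sum_mul_sum_of_sq_le_mul _ (fun ω _ => mul_nonneg (hμ0 ω) (sq_nonneg _))
          (fun ω _ => mul_nonneg (hμ0 ω) (sq_nonneg _)) fun ω _ => by ring_nf; rfl
    _ ≤ A ^ 2 * B ^ 2 :=
        mul_le_mul hu hv (sum_nonneg fun ω _ => mul_nonneg (hμ0 ω) (sq_nonneg _)) (sq_nonneg A)
    _ = (A * B) ^ 2 := (mul_pow A B 2).symm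

theorem sub_le_sum_mul_clamp_mul_clamp_sub (hμ0 : ∀ ω, 0 ≤ μ ω) (hμ1 : ∑ ω, μ ω = 1)
    {X Y : Ω → ℝ} {T M ε : ℝ} (hT : 0 ≤ T) (hM : 0 < M) (hε : 0 ≤ ε)
    (hEX : ∑ ω, μ ω * X ω = 0) (hEY2 : ∑ ω, μ ω * Y ω ^ 2 ≤ 1)
    (htrunc : ∑ ω, μ ω * (X ω - clamp T (X ω)) ^ 2 ≤ ε ^ 2) :
    ∑ ω, μ ω * (X ω * Y ω) - 2 * ε - T / M ≤
      ∑ ω, μ ω * (clamp T (X ω) * clamp M (Y ω)) -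
        (∑ ω, μ ω * clamp T (X ω)) * ∑ ω, μ ω * clamp M (Y ω) := by
  have hY2 : ∑ ω, μ ω * Y ω ^ 2 ≤ 1 ^ 2 := by rwa [one_pow]
  have hone : ∑ ω, μ ω * (fun _ => (1 : ℝ)) ω ^ 2 ≤ 1 ^ 2 := by simp [hμ1]
  have hXY : |∑ ω, μ ω * ((X ω - clamp T (X ω)) * Y ω)| ≤ ε * 1 :=
    abs_sum_mul_mul_le_of_sum_mul_sq_le hμ0 hε zero_le_one htrunc hY2
  have hclX : |∑ ω, μ ω * ((X ω - clamp T (X ω)) * 1)| ≤ ε * 1 :=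
    abs_sum_mul_mul_le_of_sum_mul_sq_le hμ0 hε zero_le_one htrunc hone
  have hclY : |∑ ω, μ ω * (clamp M (Y ω) * 1)| ≤ 1 * 1 := by
    refine abs_sum_mul_mul_le_of_sum_mul_sq_le hμ0 zero_le_one zero_le_one
      (le_trans (sum_le_sum fun ω _ => ?_) hY2) hone
    exact mul_le_mul_of_nonneg_left (sq_le_sq.2 (abs_clamp_le_abs hM.le _)) (hμ0 ω)
  have hYtail : ∑ ω, μ ω * (clamp T (X ω) * (Y ω - clamp M (Y ω))) ≤ T / M := by
    calc ∑ ω, μ ω * (clamp T (X ω) * (Y ω - clamp M (Y ω)))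
        ≤ ∑ ω, μ ω * (T / M * Y ω ^ 2) := sum_le_sum fun ω _ => by
          refine mul_le_mul_of_nonneg_left ((le_abs_self _).trans ?_) (hμ0 ω)
          rw [abs_mul, div_mul_eq_mul_div, mul_div_assoc]
          exact mul_le_mul (abs_clamp_le hT _) (abs_sub_clamp_le_sq_div hM _) (abs_nonneg _) hT
      _ ≤ T / M := by
          simp only [mul_left_comm (μ _), ← mul_sum]
          exact mul_le_of_le_one_right (div_nonneg hT hM.le) hEY2
  have hsplit : ∑ ω, μ ω * (X ω * Y ω) = ∑ ω, μ ω * ((X ω - clamp T (X ω)) * Y ω) +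
      ∑ ω, μ ω * (clamp T (X ω) * (Y ω - clamp M (Y ω))) +
      ∑ ω, μ ω * (clamp T (X ω) * clamp M (Y ω)) := by
    simp only [← sum_add_distrib]
    exact sum_congr rfl fun ω _ => by ring
  have hmean : ∑ ω, μ ω * clamp T (X ω) = -∑ ω, μ ω * ((X ω - clamp T (X ω)) * 1) := by
    rw [eq_neg_iff_add_eq_zero, ← hEX, ← sum_add_distrib]
    exact sum_congr rfl fun ω _ => by ring
  have hprod : |(∑ ω, μ ω * clamp T (X ω)) * ∑ ω, μ ω * clamp M (Y ω)| ≤ ε := by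
    simp only [mul_one] at hclX hclY
    rw [abs_mul, hmean, abs_neg]
    simpa using mul_le_mul hclX hclY (abs_nonneg _) hε
  linarith [abs_le.1 hXY, abs_le.1 hprod]

lemma sum_mul_sq_sub_clamp_le_of_subgaussian (hμ0 : ∀ ω, 0 ≤ μ ω) {X : Ω → ℝ} {β c : ℝ}
    (hβ : 0 < β) (hβc : β ≤ c)
    (htail : ∀ t : ℝ, 0 ≤ t →
      ∑ ω ∈ univ.filter (fun ω => t ≤ |X ω|), μ ω ≤ 2 * exp (-t ^ 2 / c ^ 2)) :
    ∑ ω, μ ω * (X ω - clamp (c * √(2 * log (2 ^ 20 * c ^ 2 / β ^ 2))) (X ω)) ^ 2 ≤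
      (β / 32) ^ 2 := by
  have hc : 0 < c := hβ.trans_le hβc
  have hβc2 : β ^ 2 ≤ c ^ 2 := pow_le_pow_left₀ hβ.le hβc 2
  set L := log (2 ^ 20 * c ^ 2 / β ^ 2)
  have hL : 0 < L := log_two_pow_mul_sq_div_sq_pos hβ hβc
  have hexpL : exp (-L) = β ^ 2 / (2 ^ 20 * c ^ 2) := by
    rw [exp_neg, exp_log (by positivity), inv_div]
  have hT2 : (c * √(2 * L)) ^ 2 = 2 * c ^ 2 * L := by
    rw [mul_pow, sq_sqrt (by positivity)]; ring
  have hrate : exp (-(c * √(2 * L)) ^ 2 / c ^ 2) = exp (-L) ^ 2 := by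
    rw [hT2, ← exp_nat_mul]; field_simp; ring_nf
  have hsmall : exp (-L) ≤ 1 / 2 ^ 20 := by
    rw [hexpL, div_le_div_iff₀ (by positivity) (by positivity)]; linarith
  -- `L e^{-L} ≤ 1` absorbs the factor `L` in `T² = 2 c² L`
  have hLexp : L * exp (-L) ≤ 1 := by
    rw [exp_neg, ← div_eq_mul_inv, div_le_one (exp_pos L)]; linarith [add_one_le_exp L]
  refine (sum_mul_sq_sub_clamp_le_of_tail hμ0 (by positivity) ?_ htail).trans ?_
  · rw [hrate]; nlinarith [(exp_pos (-L)).le]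
  calc 8 * (c * √(2 * L)) ^ 2 * exp (-(c * √(2 * L)) ^ 2 / c ^ 2)
      = 16 * c ^ 2 * (L * exp (-L)) * exp (-L) := by rw [hrate, hT2]; ring
    _ ≤ 16 * c ^ 2 * exp (-L) := by
        have := mul_le_mul_of_nonneg_right hLexp (exp_pos (-L)).le
        nlinarith [sq_nonneg c]
    _ ≤ (β / 32) ^ 2 := by rw [hexpL]; field_simp; norm_num

end WeightedSums

theorem information_lower_bound_of_correlation_subgaussian
    {Ω : Type*} [Fintype Ω] (μ : Ω → ℝ)
    (hμ0 : ∀ ω, 0 ≤ μ ω) (hμ1 : ∑ ω, μ ω = 1)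
    (X Y : Ω → ℝ) (β c : ℝ) (hβ : 0 < β) (hβc : β ≤ c)
    (hEX : ∑ ω, μ ω * X ω = 0)
    (hEY2 : ∑ ω, μ ω * (Y ω) ^ 2 ≤ 1)
    (hEXY : ∑ ω, μ ω * (X ω * Y ω) = β)
    -- `X` is sub-Gaussian with variance proxy `c²`
    (htail : ∀ t : ℝ, 0 ≤ t →
      ∑ ω ∈ Finset.univ.filter (fun ω => t ≤ |X ω|), μ ω ≤
        2 * Real.exp (-t ^ 2 / c ^ 2)) :
    Real.sqrt (miFin μ X Y) ≥
      β ^ 2 / (192 * Real.sqrt 2 * c ^ 2 * Real.log (2 ^ 20 * c ^ 2 / β ^ 2)) := by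
  have hc : 0 < c := hβ.trans_le hβc
  set L := log (2 ^ 20 * c ^ 2 / β ^ 2)
  have hL : 0 < L := log_two_pow_mul_sq_div_sq_pos hβ hβc
  set T := c * √(2 * L)
  set M := 8 * T / β
  have hT : 0 < T := by positivity
  have hM : 0 < M := by positivity
  have hcov := sub_le_sum_mul_clamp_mul_clamp_sub hμ0 hμ1 hT.le hM (by positivity) hEX hEY2
    (sum_mul_sq_sub_clamp_le_of_subgaussian hμ0 hβ hβc htail)
  have hTM : T / M = β / 8 := by simp only [M]; field_simp
  have hbound := le_sqrt_miFin_of_le_sum_mul_sub_mul hμ0 hμ1 (X := X) (Y := Y) hT hM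
    (abs_clamp_le hT.le) (abs_clamp_le hM.le) (by positivity : 0 ≤ β / 2) (by linarith)
  have hT2 : T ^ 2 = 2 * c ^ 2 * L := by rw [mul_pow, sq_sqrt (by positivity)]; ring
  rw [ge_iff_le]
  calc β ^ 2 / (192 * √2 * c ^ 2 * L) ≤ β ^ 2 / (32 * √2 * c ^ 2 * L) :=
        div_le_div_of_nonneg_left (by positivity) (by positivity) (by nlinarith [sqrt_nonneg 2])
    _ = β / 2 / (√2 * T * M) := by simp only [M]; field_simp; rw [hT2]; ring
    _ ≤ √(miFin μ X Y) := hbound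

end
end

section
/- Let X and Y be discrete random variables on a common probability space such that |X| ≤ 1 almost surely, E[X] = 0, E[Y²] ≤ 1, and E[XY] = β. Then √(I(X;Y)) ≥ β²/(2√2). -/
/-!
Write `I(X;Y)` as the Kullback–Leibler divergence of `p = P_{XY}` from `q = P_X ⊗ P_Y` over pairs
of values. Since `log t ≥ 1 - 1/t`, each term `p log (p/q) - p + q` dominates the Hellinger term
`(√p - √q)²`, and factoring `p - q = (√p - √q)(√p + √q)`, Cauchy–Schwarz gives
`Cov(f X, g Y)² ≤ 2 (E[f(X)² g(Y)²] + E[f(X)²] E[g(Y)²]) I(X;Y)`.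
For `f = g = id` the hypotheses make the bracket at most `2`, so `β² ≤ 4 I(X;Y)`; as also
`|β| ≤ 1`, this gives `√I(X;Y) ≥ |β|/2 ≥ β²/(2√2)`.
-/

open Finset Real

noncomputable section

lemma sq_sqrt_sub_sqrt_le_mul_log_div {p q : ℝ} (hp : 0 ≤ p) (hq : 0 ≤ q) (hpq : q = 0 → p = 0) :
    (√p - √q) ^ 2 ≤ p * log (p / q) - p + q := by
  rcases hp.eq_or_lt with rfl | hp
  · simp [sq_sqrt hq]
  have hq : 0 < q := hq.lt_of_ne fun h => hp.ne' (hpq h.symm)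
  set a := √p
  set b := √q
  have ha : 0 < a := sqrt_pos.2 hp
  have hpa : p = a ^ 2 := (sq_sqrt hp.le).symm
  have hqb : q = b ^ 2 := (sq_sqrt hq.le).symm
  have hlog : log (p / q) = 2 * log (a / b) := by
    rw [hpa, hqb, ← div_pow, log_pow, Nat.cast_ofNat]
  have hgibbs : a ^ 2 - a * b ≤ a ^ 2 * log (a / b) := by
    have := mul_le_mul_of_nonneg_left
      (one_sub_inv_le_log_of_pos (by positivity : 0 < a / b)) (sq_nonneg a)
    rwa [inv_div, mul_sub, mul_one, sq, mul_assoc, mul_div_cancel₀ _ ha.ne', ← sq] at this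
  rw [hlog, hpa, hqb]
  nlinarith

lemma sq_sub_le_sq_sqrt_sub_sqrt_mul {p q : ℝ} (hp : 0 ≤ p) (hq : 0 ≤ q) :
    (p - q) ^ 2 ≤ (√p - √q) ^ 2 * (2 * (p + q)) := by
  have hfactor : p - q = (√p - √q) * (√p + √q) := by
    linear_combination sq_sqrt hq - sq_sqrt hp
  have hsum : (√p + √q) ^ 2 ≤ 2 * (p + q) := by
    nlinarith [sq_nonneg (√p - √q), sq_sqrt hp, sq_sqrt hq]
  rw [hfactor, mul_pow]
  exact mul_le_mul_of_nonneg_left hsum (sq_nonneg _)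

section Divergence

variable {ι : Type*} {s : Finset ι} {p q : ι → ℝ}

lemma sum_sq_sqrt_sub_sqrt_le_sum_mul_log_div (hp : ∀ i ∈ s, 0 ≤ p i) (hq : ∀ i ∈ s, 0 ≤ q i)
    (hpq : ∀ i ∈ s, q i = 0 → p i = 0) (hsum : ∑ i ∈ s, p i = ∑ i ∈ s, q i) :
    ∑ i ∈ s, (√(p i) - √(q i)) ^ 2 ≤ ∑ i ∈ s, p i * log (p i / q i) := by
  calc ∑ i ∈ s, (√(p i) - √(q i)) ^ 2
      ≤ ∑ i ∈ s, (p i * log (p i / q i) - p i + q i) :=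
        sum_le_sum fun i hi => sq_sqrt_sub_sqrt_le_mul_log_div (hp i hi) (hq i hi) (hpq i hi)
    _ = ∑ i ∈ s, p i * log (p i / q i) := by
        rw [sum_add_distrib, sum_sub_distrib, hsum, sub_add_cancel]

lemma sq_sum_sub_mul_le_mul_sum_mul_log_div (hp : ∀ i ∈ s, 0 ≤ p i) (hq : ∀ i ∈ s, 0 ≤ q i)
    (hpq : ∀ i ∈ s, q i = 0 → p i = 0) (hsum : ∑ i ∈ s, p i = ∑ i ∈ s, q i) {h : ι → ℝ} {M : ℝ}
    (hM : ∑ i ∈ s, (p i + q i) * h i ^ 2 ≤ M) :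
    (∑ i ∈ s, (p i - q i) * h i) ^ 2 ≤ 2 * M * ∑ i ∈ s, p i * log (p i / q i) := by
  have hhel := sum_sq_sqrt_sub_sqrt_le_sum_mul_log_div hp hq hpq hsum
  have hg : ∀ i ∈ s, 0 ≤ 2 * (p i + q i) * h i ^ 2 := fun i hi => by
    have := hp i hi; have := hq i hi; positivity
  have hcs := sum_sq_le_sum_mul_sum_of_sq_le_mul s
    (r := fun i => (p i - q i) * h i) (f := fun i => (√(p i) - √(q i)) ^ 2) (fun i _ => sq_nonneg _)
    hg fun i hi => by
      rw [mul_pow, ← mul_assoc]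
      exact mul_le_mul_of_nonneg_right
        (sq_sub_le_sq_sqrt_sub_sqrt_mul (hp i hi) (hq i hi)) (sq_nonneg _)
  have hkl : 0 ≤ ∑ i ∈ s, p i * log (p i / q i) :=
    (sum_nonneg fun i _ => sq_nonneg _).trans hhel
  calc _ ≤ _ := hcs
    _ ≤ (∑ i ∈ s, p i * log (p i / q i)) * ∑ i ∈ s, 2 * (p i + q i) * h i ^ 2 :=
        mul_le_mul_of_nonneg_right hhel (sum_nonneg hg)
    _ ≤ (∑ i ∈ s, p i * log (p i / q i)) * (2 * M) := by
        simp only [mul_assoc, ← mul_sum]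
        gcongr
    _ = _ := mul_comm _ _

end Divergence

section Law

variable {Ω α : Type*} [Fintype Ω] [DecidableEq α] (μ : Ω → ℝ)

def law (Z : Ω → α) (a : α) : ℝ := ∑ ω with Z ω = a, μ ω

lemma sum_law_mul {Z : Ω → α} {t : Finset α} (ht : ∀ ω, Z ω ∈ t) (f : α → ℝ) :
    ∑ a ∈ t, law μ Z a * f a = ∑ ω, μ ω * f (Z ω) := by
  rw [← sum_fiberwise_of_maps_to (fun ω _ => ht ω)]
  refine sum_congr rfl fun a _ => ?_
  rw [law, sum_mul]
  exact sum_congr rfl fun ω hω => by rw [(mem_filter.1 hω).2]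

variable {μ}

lemma law_nonneg (hμ : ∀ ω, 0 ≤ μ ω) (Z : Ω → α) (a : α) : 0 ≤ law μ Z a :=
  sum_nonneg fun ω _ => hμ ω

lemma law_le_law_comp {β : Type*} [DecidableEq β] (hμ : ∀ ω, 0 ≤ μ ω) (Z : Ω → α) (g : α → β)
    (a : α) : law μ Z a ≤ law μ (fun ω => g (Z ω)) (g a) :=
  sum_le_sum_of_subset_of_nonneg (monotone_filter_right _ fun _ _ h => congrArg g h)
    fun ω _ _ => hμ ω

end Law

lemma miFin_eq_sum_law {Ω 𝒳 𝒴 : Type*} [Fintype Ω] [DecidableEq 𝒳] [DecidableEq 𝒴] (μ : Ω → ℝ)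
    (X : Ω → 𝒳) (Y : Ω → 𝒴) :
    miFin μ X Y = ∑ z ∈ univ.image X ×ˢ univ.image Y,
      law μ (fun ω => (X ω, Y ω)) z *
        log (law μ (fun ω => (X ω, Y ω)) z / (law μ X z.1 * law μ Y z.2)) := by
  rw [sum_product]
  simp only [miFin, law, Prod.mk.injEq]
  congr!

lemma sq_covariance_le_two_mul_miFin {Ω 𝒳 𝒴 : Type*} [Fintype Ω] [DecidableEq 𝒳] [DecidableEq 𝒴]
    {μ : Ω → ℝ} (hμ0 : ∀ ω, 0 ≤ μ ω) (hμ1 : ∑ ω, μ ω = 1) (X : Ω → 𝒳) (Y : Ω → 𝒴)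
    {f : 𝒳 → ℝ} {g : 𝒴 → ℝ} {M : ℝ}
    (hM : ∑ ω, μ ω * (f (X ω) * g (Y ω)) ^ 2 +
      (∑ ω, μ ω * f (X ω) ^ 2) * ∑ ω, μ ω * g (Y ω) ^ 2 ≤ M) :
    (∑ ω, μ ω * (f (X ω) * g (Y ω)) - (∑ ω, μ ω * f (X ω)) * ∑ ω, μ ω * g (Y ω)) ^ 2 ≤
      2 * M * miFin μ X Y := by
  set s := univ.image X ×ˢ univ.image Y
  set p := law μ (fun ω => (X ω, Y ω))
  set q : 𝒳 × 𝒴 → ℝ := fun z => law μ X z.1 * law μ Y z.2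
  have hmem : ∀ ω, (X ω, Y ω) ∈ s := fun ω => mem_product.2 ⟨mem_image_of_mem X (mem_univ ω),
    mem_image_of_mem Y (mem_univ ω)⟩
  have hp_sum (F : 𝒳 × 𝒴 → ℝ) : ∑ z ∈ s, p z * F z = ∑ ω, μ ω * F (X ω, Y ω) :=
    sum_law_mul μ hmem F
  have hq_sum (a : 𝒳 → ℝ) (b : 𝒴 → ℝ) :
      ∑ z ∈ s, q z * (a z.1 * b z.2) = (∑ ω, μ ω * a (X ω)) * ∑ ω, μ ω * b (Y ω) := by
    rw [← sum_law_mul μ (fun ω => mem_image_of_mem X (mem_univ ω)),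
      ← sum_law_mul μ (fun ω => mem_image_of_mem Y (mem_univ ω)), sum_mul_sum, sum_product]
    exact sum_congr rfl fun x _ => sum_congr rfl fun y _ => by ring
  have hsum : ∑ z ∈ s, p z = ∑ z ∈ s, q z := by
    have h1 := hp_sum fun _ => 1
    have h2 := hq_sum (fun _ => 1) fun _ => 1
    simp only [mul_one] at h1 h2
    rw [h1, h2, hμ1, one_mul]
  have hpq : ∀ z ∈ s, q z = 0 → p z = 0 := fun z _ hq => by
    rcases mul_eq_zero.1 hq with h | h
    · exact le_antisymm (h ▸ law_le_law_comp hμ0 _ Prod.fst z) (law_nonneg hμ0 _ z)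
    · exact le_antisymm (h ▸ law_le_law_comp hμ0 _ Prod.snd z) (law_nonneg hμ0 _ z)
  have hcov : ∑ z ∈ s, (p z - q z) * (f z.1 * g z.2) =
      ∑ ω, μ ω * (f (X ω) * g (Y ω)) - (∑ ω, μ ω * f (X ω)) * ∑ ω, μ ω * g (Y ω) := by
    simp only [sub_mul, sum_sub_distrib]
    rw [hp_sum, hq_sum]
  have hvar : ∑ z ∈ s, (p z + q z) * (f z.1 * g z.2) ^ 2 =
      ∑ ω, μ ω * (f (X ω) * g (Y ω)) ^ 2 + (∑ ω, μ ω * f (X ω) ^ 2) * ∑ ω, μ ω * g (Y ω) ^ 2 := by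
    simp only [add_mul, sum_add_distrib, mul_pow]
    rw [hp_sum, hq_sum (f · ^ 2) (g · ^ 2)]
  rw [miFin_eq_sum_law, ← hcov]
  exact sq_sum_sub_mul_le_mul_sum_mul_log_div (fun z _ => law_nonneg hμ0 _ z)
    (fun z _ => mul_nonneg (law_nonneg hμ0 _ _) (law_nonneg hμ0 _ _)) hpq hsum (hvar ▸ hM)

lemma sq_div_two_mul_sqrt_two_le_sqrt {β I : ℝ} (hβ : |β| ≤ 1) (hI : β ^ 2 ≤ 4 * I) :
    β ^ 2 / (2 * √2) ≤ √I := by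
  have habs : |β| ≤ 2 * √I := by
    rw [← sqrt_sq_eq_abs, show (2 : ℝ) = √4 by norm_num, ← sqrt_mul zero_le_four]
    exact sqrt_le_sqrt hI
  have hsqrt2 : 2 ≤ 2 * √2 := le_mul_of_one_le_right zero_le_two (one_le_sqrt.2 one_le_two)
  calc β ^ 2 / (2 * √2) ≤ β ^ 2 / 2 := div_le_div_of_nonneg_left (sq_nonneg β) two_pos hsqrt2
    _ ≤ |β| / 2 := by
        rw [← sq_abs]
        gcongr
        exact pow_le_of_le_one (abs_nonneg β) hβ two_ne_zero
    _ ≤ √I := by linarith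

theorem information_lower_bound_of_correlation_bounded
    {Ω : Type*} [Fintype Ω] (μ : Ω → ℝ)
    (hμ0 : ∀ ω, 0 ≤ μ ω) (hμ1 : ∑ ω, μ ω = 1)
    (X Y : Ω → ℝ) (β : ℝ)
    -- `|X| ≤ 1` almost surely
    (hXbdd : ∀ ω, 0 < μ ω → |X ω| ≤ 1)
    (hEX : ∑ ω, μ ω * X ω = 0)
    (hEY2 : ∑ ω, μ ω * (Y ω) ^ 2 ≤ 1)
    (hEXY : ∑ ω, μ ω * (X ω * Y ω) = β) :
    Real.sqrt (miFin μ X Y) ≥ β ^ 2 / (2 * Real.sqrt 2) := by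
  have hX2 (ω : Ω) : μ ω * X ω ^ 2 ≤ μ ω := by
    rcases (hμ0 ω).eq_or_lt with h | h
    · simp [← h]
    · exact mul_le_of_le_one_right h.le ((sq_le_one_iff_abs_le_one _).2 (hXbdd ω h))
  have hEX2 : ∑ ω, μ ω * X ω ^ 2 ≤ 1 := hμ1 ▸ sum_le_sum fun ω _ => hX2 ω
  have hEXY2 : ∑ ω, μ ω * (X ω * Y ω) ^ 2 ≤ 1 := hEY2.trans' <| sum_le_sum fun ω _ => by
    rw [mul_pow, ← mul_assoc]
    exact mul_le_mul_of_nonneg_right (hX2 ω) (sq_nonneg _)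
  have hEY2_nonneg : 0 ≤ ∑ ω, μ ω * Y ω ^ 2 :=
    sum_nonneg fun ω _ => mul_nonneg (hμ0 ω) (sq_nonneg _)
  have hβ1 : |β| ≤ 1 := by
    have hcs := sum_sq_le_sum_mul_sum_of_sq_le_mul univ (r := fun ω => μ ω * (X ω * Y ω))
      (f := fun ω => μ ω * X ω ^ 2) (g := fun ω => μ ω * Y ω ^ 2)
      (fun ω _ => mul_nonneg (hμ0 ω) (sq_nonneg _)) (fun ω _ => mul_nonneg (hμ0 ω) (sq_nonneg _))
      fun ω _ => le_of_eq (by ring)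
    rw [hEXY] at hcs
    exact (sq_le_one_iff_abs_le_one β).1 (hcs.trans (mul_le_one₀ hEX2 hEY2_nonneg hEY2))
  have hI : β ^ 2 ≤ 4 * miFin μ X Y := by
    have h := sq_covariance_le_two_mul_miFin hμ0 hμ1 X Y (f := id) (g := id) (M := 2)
      ((add_le_add hEXY2 (mul_le_one₀ hEX2 hEY2_nonneg hEY2)).trans_eq one_add_one_eq_two)
    simp only [id, hEXY, hEX, zero_mul, sub_zero] at h
    linarith
  exact (sq_div_two_mul_sqrt_two_le_sqrt hβ1 hI).ge

end
end

section
/- Let X and Y be random variables with E[X] = 0, E[Y²] ≤ 1, E[XY] = β for some 0 < β ≤ c, and suppose P(|X| ≥ t) ≤ 2e^{−t²/c²} for all t ≥ 0. Set c' = 2c√(ln(2^30 c³/β³)) and define the truncated and rescaled variable X̂ = max(min(X, c'), −c')/c'. Then E[X̂ · Y] ≥ β/(2c'). -/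
/-!
Clipping `X` at level `c'` changes it by `(|X| - c')₊`. By the layer-cake formula and the
sub-Gaussian tail, `E[(|X| - c')₊²] ≤ 2c² exp(-c'²/c²)`, which for the chosen `c'` is at most
`(β/2)²`. Weighted AM-GM against `E[Y²] ≤ 1` then shows that clipping costs at most `β/2` of the
correlation `E[XY] = β`, so `E[clip(X)·Y] ≥ β/2`, and dividing by `c'` gives the claim.
-/

open MeasureTheory Real

lemma abs_sub_max_min_neg (x : ℝ) {a : ℝ} (ha : 0 ≤ a) :
    |x - max (min x a) (-a)| = max (|x| - a) 0 := by
  rcases le_total x (-a) with h | h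
  · rw [max_eq_right (by linarith [min_le_left x a]), abs_of_nonpos (by linarith),
      abs_of_nonpos (by linarith), max_eq_left (by linarith)]
    ring
  rcases le_total x a with h' | h'
  · rw [min_eq_left h', max_eq_left h, sub_self, abs_zero, max_eq_right]
    linarith [abs_le.2 ⟨h, h'⟩]
  · rw [min_eq_right h', max_eq_left (by linarith), abs_of_nonneg (by linarith),
      abs_of_nonneg (by linarith), max_eq_left (by linarith)]

lemma integrable_and_integral_le_of_lintegral_ofReal_le {α : Type*} [MeasurableSpace α]
    {μ : Measure α} {f : α → ℝ} (hf : 0 ≤ᵐ[μ] f) (hfm : AEStronglyMeasurable f μ) {b : ℝ}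
    (hb : 0 ≤ b) (h : ∫⁻ x, ENNReal.ofReal (f x) ∂μ ≤ ENNReal.ofReal b) :
    Integrable f μ ∧ ∫ x, f x ∂μ ≤ b :=
  ⟨⟨hfm, (hasFiniteIntegral_iff_ofReal hf).2 (h.trans_lt ENNReal.ofReal_lt_top)⟩,
    integral_eq_lintegral_of_nonneg_ae hf hfm ▸ ENNReal.toReal_le_of_le_ofReal hb h⟩

lemma lintegral_exp_neg_mul_Ioi {b K : ℝ} (hb : 0 < b) (hK : 0 ≤ K) :
    ∫⁻ t in Set.Ioi 0, ENNReal.ofReal (K * exp (-b * t)) = ENNReal.ofReal (K / b) := by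
  rw [← ofReal_integral_eq_lintegral_ofReal
    ((integrableOn_exp_mul_Ioi (neg_lt_zero.2 hb) 0).const_mul K)
    (ae_of_all _ fun _ => by positivity), integral_const_mul,
    integral_exp_mul_Ioi (neg_lt_zero.2 hb)]
  congr 1
  simp only [mul_zero, exp_zero]
  field_simp

section SubGaussian

variable {Ω : Type*} [MeasurableSpace Ω] {μ : Measure Ω} {X : Ω → ℝ} {a c : ℝ}

lemma lintegral_sq_posPart_sub_le_of_tail (hX : AEMeasurable X μ) (ha : 0 ≤ a) (hc : c ≠ 0)
    (htail : ∀ t : ℝ, 0 ≤ t →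
      μ {ω | t ≤ |X ω|} ≤ ENNReal.ofReal (2 * exp (-t ^ 2 / c ^ 2))) :
    ∫⁻ ω, ENNReal.ofReal (max (|X ω| - a) 0 ^ 2) ∂μ
      ≤ ENNReal.ofReal (2 * c ^ 2 * exp (-a ^ 2 / c ^ 2)) := by
  have hc2 : 0 < c ^ 2 := by positivity
  have hlevel : ∀ t ∈ Set.Ioi (0 : ℝ), μ {ω | t < max (|X ω| - a) 0 ^ 2}
      ≤ ENNReal.ofReal (2 * exp (-a ^ 2 / c ^ 2) * exp (-(c ^ 2)⁻¹ * t)) := by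
    intro t (ht : 0 < t)
    have hsub : {ω | t < max (|X ω| - a) 0 ^ 2} ⊆ {ω | a + √t ≤ |X ω|} := by
      intro ω (hω : t < _)
      have := Real.sqrt_lt_sqrt ht.le hω
      rw [Real.sqrt_sq (le_max_right _ _), lt_max_iff] at this
      rcases this with h | h
      · exact (by linarith : a + √t ≤ |X ω|)
      · exact absurd h (Real.sqrt_nonneg t).not_gt
    -- `(a + √t)² ≥ a² + t` splits the Gaussian tail into a constant times an exponential in `t`
    have hsplit : -(a + √t) ^ 2 / c ^ 2 ≤ -a ^ 2 / c ^ 2 + -(c ^ 2)⁻¹ * t := by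
      have : a ^ 2 + t ≤ (a + √t) ^ 2 := by
        nlinarith [Real.sq_sqrt ht.le, Real.sqrt_nonneg t]
      calc -(a + √t) ^ 2 / c ^ 2 ≤ -(a ^ 2 + t) / c ^ 2 := by gcongr
        _ = -a ^ 2 / c ^ 2 + -(c ^ 2)⁻¹ * t := by ring
    calc μ {ω | t < max (|X ω| - a) 0 ^ 2} ≤ μ {ω | a + √t ≤ |X ω|} := measure_mono hsub
      _ ≤ ENNReal.ofReal (2 * exp (-(a + √t) ^ 2 / c ^ 2)) := htail _ (by positivity)
      _ ≤ ENNReal.ofReal (2 * exp (-a ^ 2 / c ^ 2) * exp (-(c ^ 2)⁻¹ * t)) := by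
        rw [mul_assoc, ← exp_add]
        gcongr
  rw [lintegral_eq_lintegral_meas_lt μ (ae_of_all _ fun _ => sq_nonneg _)
    (((hX.abs.sub_const a).max aemeasurable_const).pow_const 2)]
  calc _ ≤ _ := setLIntegral_mono' measurableSet_Ioi hlevel
    _ = _ := by
      rw [lintegral_exp_neg_mul_Ioi (inv_pos.2 hc2) (by positivity), div_inv_eq_mul]
      ring_nf

lemma integrable_sq_sub_clip_and_integral_le (hX : Measurable X) (ha : 0 ≤ a) (hc : c ≠ 0)
    (htail : ∀ t : ℝ, 0 ≤ t →
      μ {ω | t ≤ |X ω|} ≤ ENNReal.ofReal (2 * exp (-t ^ 2 / c ^ 2))) :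
    Integrable (fun ω => (X ω - max (min (X ω) a) (-a)) ^ 2) μ ∧
      ∫ ω, (X ω - max (min (X ω) a) (-a)) ^ 2 ∂μ ≤ 2 * c ^ 2 * exp (-a ^ 2 / c ^ 2) := by
  simp_rw [← sq_abs (_ - _), abs_sub_max_min_neg _ ha]
  exact integrable_and_integral_le_of_lintegral_ofReal_le (ae_of_all _ fun _ => sq_nonneg _)
    ((((hX.abs.sub_const a).max measurable_const).pow_const 2).aestronglyMeasurable)
    (by positivity) (lintegral_sq_posPart_sub_le_of_tail hX.aemeasurable ha hc htail)

end SubGaussian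

lemma integral_mul_le_of_integral_sq_le {Ω : Type*} [MeasurableSpace Ω] {μ : Measure Ω}
    {V Y : Ω → ℝ} (hV : AEStronglyMeasurable V μ) (hY : AEStronglyMeasurable Y μ)
    (hV2 : Integrable (fun ω => V ω ^ 2) μ) (hY2 : Integrable (fun ω => Y ω ^ 2) μ)
    {δ : ℝ} (hδ : 0 < δ) (hV2le : ∫ ω, V ω ^ 2 ∂μ ≤ δ ^ 2) (hY2le : ∫ ω, Y ω ^ 2 ∂μ ≤ 1) :
    Integrable (fun ω => V ω * Y ω) μ ∧ ∫ ω, V ω * Y ω ∂μ ≤ δ := by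
  have hVY : Integrable (fun ω => V ω * Y ω) μ :=
    ((memLp_two_iff_integrable_sq hV).2 hV2).integrable_mul ((memLp_two_iff_integrable_sq hY).2 hY2)
  refine ⟨hVY, ?_⟩
  have hamgm : ∀ ω, V ω * Y ω ≤ δ⁻¹ / 2 * V ω ^ 2 + δ / 2 * Y ω ^ 2 := fun ω => by
    have := two_mul_le_add_mul_sq (a := V ω) (b := Y ω) (inv_pos.2 hδ)
    rw [inv_inv] at this
    linarith
  calc ∫ ω, V ω * Y ω ∂μ ≤ ∫ ω, δ⁻¹ / 2 * V ω ^ 2 + δ / 2 * Y ω ^ 2 ∂μ :=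
        integral_mono hVY ((hV2.const_mul _).add (hY2.const_mul _)) hamgm
    _ = δ⁻¹ / 2 * ∫ ω, V ω ^ 2 ∂μ + δ / 2 * ∫ ω, Y ω ^ 2 ∂μ := by
        rw [integral_add (hV2.const_mul _) (hY2.const_mul _), integral_const_mul,
          integral_const_mul]
    _ ≤ δ⁻¹ / 2 * δ ^ 2 + δ / 2 * 1 := by gcongr
    _ = δ := by field_simp; ring

lemma two_mul_sq_mul_exp_neg_le {β c : ℝ} (hβ : 0 < β) (hβc : β ≤ c) :
    2 * c ^ 2 * exp (-(2 * c * √(log (2 ^ 30 * c ^ 3 / β ^ 3))) ^ 2 / c ^ 2) ≤ (β / 2) ^ 2 := by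
  set A := 2 ^ 30 * c ^ 3 / β ^ 3
  have hc : 0 < c := hβ.trans_le hβc
  have hA : 8 * c ^ 2 / β ^ 2 ≤ A := by
    rw [div_le_div_iff₀ (by positivity) (by positivity)]
    calc 8 * c ^ 2 * β ^ 3 = 8 * (c ^ 2 * β ^ 2 * β) := by ring
      _ ≤ 2 ^ 30 * (c ^ 2 * β ^ 2 * c) := by gcongr; norm_num
      _ = 2 ^ 30 * c ^ 3 * β ^ 2 := by ring
  have hA1 : 1 ≤ A := by
    refine le_trans ?_ hA
    rw [le_div_iff₀ (by positivity)]
    nlinarith [pow_le_pow_left₀ hβ.le hβc 2, pow_pos hβ 2]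
  have hL : 0 ≤ log A := log_nonneg hA1
  have hexp : exp (-(2 * c * √(log A)) ^ 2 / c ^ 2) ≤ A⁻¹ :=
    calc exp (-(2 * c * √(log A)) ^ 2 / c ^ 2) = exp (-(4 * log A)) := by
          rw [mul_pow, Real.sq_sqrt hL]
          congr 1
          field_simp
          ring
      _ ≤ exp (-log A) := by gcongr; linarith
      _ = A⁻¹ := by rw [exp_neg, exp_log (by linarith)]
  calc 2 * c ^ 2 * exp (-(2 * c * √(log A)) ^ 2 / c ^ 2) ≤ 2 * c ^ 2 * A⁻¹ := by gcongr
    _ ≤ 2 * c ^ 2 * (8 * c ^ 2 / β ^ 2)⁻¹ := by gcongr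
    _ = (β / 2) ^ 2 := by field_simp; norm_num

theorem truncation_preserves_correlation_general
    {Ω : Type*} [MeasurableSpace Ω] (μ : Measure Ω)
    (X Y : Ω → ℝ) (hXm : Measurable X) (hYm : Measurable Y)
    (β c : ℝ) (hβ : 0 < β) (hβc : β ≤ c)
    (hY2int : Integrable (fun ω => (Y ω) ^ 2) μ) (hEY2 : ∫ ω, (Y ω) ^ 2 ∂μ ≤ 1)
    (hXYint : Integrable (fun ω => X ω * Y ω) μ) (hEXY : ∫ ω, X ω * Y ω ∂μ = β)
    -- sub-Gaussian tail bound `P(|X| ≥ t) ≤ 2exp(−t²/c²)`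
    (htail : ∀ t : ℝ, 0 ≤ t →
      μ {ω | t ≤ |X ω|} ≤ ENNReal.ofReal (2 * Real.exp (-t ^ 2 / c ^ 2)))
    (c' : ℝ) (hc' : c' = 2 * c * Real.sqrt (Real.log (2 ^ 30 * c ^ 3 / β ^ 3))) :
    ∫ ω, (max (min (X ω) c') (-c') / c') * Y ω ∂μ ≥ β / (2 * c') := by
  have hc : 0 < c := hβ.trans_le hβc
  have hc'0 : 0 ≤ c' := hc' ▸ by positivity
  set Z : Ω → ℝ := fun ω => max (min (X ω) c') (-c')
  have hZm : Measurable Z := (hXm.min measurable_const).max measurable_const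
  obtain ⟨hV2, hV2le⟩ := integrable_sq_sub_clip_and_integral_le hXm hc'0 hc.ne' htail
  obtain ⟨hVY, hcost⟩ := integral_mul_le_of_integral_sq_le (V := fun ω => X ω - Z ω)
    (hXm.sub hZm).aestronglyMeasurable hYm.aestronglyMeasurable hV2 hY2int (half_pos hβ)
    (hV2le.trans (hc' ▸ two_mul_sq_mul_exp_neg_le hβ hβc)) hEY2
  have hZY : β / 2 ≤ ∫ ω, Z ω * Y ω ∂μ := by
    have : ∫ ω, Z ω * Y ω ∂μ = ∫ ω, X ω * Y ω ∂μ - ∫ ω, (X ω - Z ω) * Y ω ∂μ := by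
      rw [← integral_sub hXYint hVY]
      congr with ω
      ring
    linarith
  calc β / (2 * c') = c'⁻¹ * (β / 2) := by ring
    _ ≤ c'⁻¹ * ∫ ω, Z ω * Y ω ∂μ := by gcongr
    _ = ∫ ω, (Z ω / c') * Y ω ∂μ := by
      rw [← integral_const_mul]
      congr with ω
      ring

theorem truncation_preserves_correlation
    {Ω : Type*} [MeasurableSpace Ω] (μ : Measure Ω) [IsProbabilityMeasure μ]
    (X Y : Ω → ℝ) (hXm : Measurable X) (hYm : Measurable Y)
    (β c : ℝ) (hβ : 0 < β) (hβc : β ≤ c)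
    (hXint : Integrable X μ) (hEX : ∫ ω, X ω ∂μ = 0)
    (hY2int : Integrable (fun ω => (Y ω) ^ 2) μ) (hEY2 : ∫ ω, (Y ω) ^ 2 ∂μ ≤ 1)
    (hXYint : Integrable (fun ω => X ω * Y ω) μ) (hEXY : ∫ ω, X ω * Y ω ∂μ = β)
    -- sub-Gaussian tail bound `P(|X| ≥ t) ≤ 2exp(−t²/c²)`
    (htail : ∀ t : ℝ, 0 ≤ t →
      μ {ω | t ≤ |X ω|} ≤ ENNReal.ofReal (2 * Real.exp (-t ^ 2 / c ^ 2)))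
    (c' : ℝ) (hc' : c' = 2 * c * Real.sqrt (Real.log (2 ^ 30 * c ^ 3 / β ^ 3))) :
    ∫ ω, (max (min (X ω) c') (-c') / c') * Y ω ∂μ ≥ β / (2 * c') :=
  truncation_preserves_correlation_general μ X Y hXm hYm β c hβ hβc hY2int hEY2 hXYint hEXY htail c'
    hc'
end

section
/- Let X and Y be discrete random variables on a common probability space with |X| ≤ 1 almost surely, E[X] = 0, E[Y²] ≤ 1, and E[XY] = β. Then E[X²] − √( E[X²] · (E[X²] − β²) ) ≤ √( 2 · I(X;Y) ). (Note that β² ≤ E[X²] by Cauchy–Schwarz, so the left-hand side is well defined and nonnegative.) -/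
/-!
Since `E[X] = 0`, `β = ∑_{x,y} (p(x,y) - p(x) p(y)) x y`. For fixed `y`, `|X| ≤ 1` bounds the
inner sum over `x` by the `ℓ¹` distance between `p(·, y)` and `p(·) p(y)`, two measures of mass
`p(y)`, and Pinsker's inequality bounds its square by `2 p(y) D_y`, where `∑_y D_y = I(X;Y)`.
Cauchy–Schwarz over `y` against `E[Y²] ≤ 1` gives `β² ≤ 2 I(X;Y)`; together with
`β² ≤ E[X²] E[Y²] ≤ 1` this yields `β² ≤ √(2 I(X;Y))`. Finally the left-hand side is at most `β²`,
because `√(s (s - b)) ≥ s - b` for `b ≥ 0`.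

Pinsker's inequality itself comes from the pointwise bound `3 (t - 1)² ≤ 2 (t + 2) klFun t`
through Cauchy–Schwarz with weights `2 (p + 2 q) / 3`.
-/

open Finset Real

noncomputable section

open InformationTheory

theorem monotoneOn_add_one_mul_log_sub_two_mul_sub_one :
    MonotoneOn (fun t : ℝ => (t + 1) * log t - 2 * (t - 1)) (Set.Ioi 0) := by
  have hderiv : ∀ t ∈ Set.Ioi (0 : ℝ),
      HasDerivAt (fun t : ℝ => (t + 1) * log t - 2 * (t - 1)) (log t - (1 - t⁻¹)) t := by
    intro t ht
    have := (((hasDerivAt_id' t).add_const 1).mul (hasDerivAt_log (ne_of_gt ht))).sub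
      (((hasDerivAt_id' t).sub_const 1).const_mul 2)
    refine this.congr_deriv ?_
    field_simp [(Set.mem_Ioi.1 ht).ne']
    ring
  refine monotoneOn_of_hasDerivWithinAt_nonneg (convex_Ioi 0)
    (fun t ht => (hderiv t ht).continuousAt.continuousWithinAt)
    (fun t ht => (hderiv t (interior_subset ht)).hasDerivWithinAt) fun t ht => ?_
  rw [interior_Ioi] at ht
  exact sub_nonneg.2 (one_sub_inv_le_log_of_pos ht)

theorem three_mul_sq_sub_one_le_klFun {t : ℝ} (ht : 0 ≤ t) :
    3 * (t - 1) ^ 2 ≤ 2 * (t + 2) * klFun t := by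
  set g : ℝ → ℝ := fun t => 2 * (t + 2) * klFun t - 3 * (t - 1) ^ 2
  set h : ℝ → ℝ := fun t => (t + 1) * log t - 2 * (t - 1)
  have hderiv : ∀ s, 0 < s → HasDerivAt g (4 * h s) s := by
    intro s hs
    have := ((((hasDerivAt_id' s).add_const 2).const_mul 2).mul (hasDerivAt_klFun hs.ne')).sub
      ((((hasDerivAt_id' s).sub_const 1).pow 2).const_mul 3)
    refine this.congr_deriv ?_
    simp only [h, klFun_apply]
    ring
  have hcont : Continuous g := by fun_prop
  have hmono : MonotoneOn h (Set.Ioi 0) := monotoneOn_add_one_mul_log_sub_two_mul_sub_one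
  have h1 : h 1 = 0 := by simp [h]
  have g1 : g 1 = 0 := by simp [g, klFun_one]
  -- `g' = 4 h` has the sign of `t - 1`, so `g` is smallest at `1`.
  suffices 0 ≤ g t by simp only [g] at this; linarith
  rcases le_total t 1 with ht1 | ht1
  · have : AntitoneOn g (Set.Icc 0 1) := by
      refine antitoneOn_of_hasDerivWithinAt_nonpos (f' := fun s => 4 * h s) (convex_Icc 0 1)
        hcont.continuousOn (fun s hs => ?_) fun s hs => ?_ <;> rw [interior_Icc] at hs
      · exact (hderiv s hs.1).hasDerivWithinAt
      · have := hmono hs.1 (Set.mem_Ioi.2 one_pos) hs.2.le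
        linarith
    exact g1 ▸ this ⟨ht, ht1⟩ ⟨zero_le_one, le_rfl⟩ ht1
  · have : MonotoneOn g (Set.Ici 1) := by
      refine monotoneOn_of_hasDerivWithinAt_nonneg (f' := fun s => 4 * h s) (convex_Ici 1)
        hcont.continuousOn (fun s hs => ?_) fun s hs => ?_ <;> rw [interior_Ici] at hs
      · exact (hderiv s (zero_lt_one.trans hs)).hasDerivWithinAt
      · have := hmono (Set.mem_Ioi.2 one_pos) (Set.mem_Ioi.2 (zero_lt_one.trans hs)) hs.le
        linarith
    exact g1 ▸ this Set.self_mem_Ici ht1 ht1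

theorem three_mul_sq_sub_le_mul_klFun_div {a b : ℝ} (ha : 0 ≤ a) (hb : 0 < b) :
    3 * (a - b) ^ 2 ≤ 2 * (a + 2 * b) * (b * klFun (a / b)) := by
  have key := mul_le_mul_of_nonneg_left (three_mul_sq_sub_one_le_klFun (div_nonneg ha hb.le))
    (sq_nonneg b)
  calc 3 * (a - b) ^ 2 = b ^ 2 * (3 * (a / b - 1) ^ 2) := by field_simp
    _ ≤ b ^ 2 * (2 * (a / b + 2) * klFun (a / b)) := key
    _ = 2 * (a + 2 * b) * (b * klFun (a / b)) := by field_simp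

theorem mul_klFun_div {a b : ℝ} (hab : b = 0 → a = 0) :
    b * klFun (a / b) = a * log (a / b) + b - a := by
  rcases eq_or_ne b 0 with hb | hb
  · simp [hb, hab hb]
  · rw [klFun_apply]
    field_simp

namespace Finset

variable {ι : Type*} {s : Finset ι} {p q : ι → ℝ}

theorem sum_mul_log_div_eq_sum_mul_klFun (hpq : ∑ i ∈ s, p i = ∑ i ∈ s, q i)
    (hac : ∀ i ∈ s, q i = 0 → p i = 0) :
    ∑ i ∈ s, p i * log (p i / q i) = ∑ i ∈ s, q i * klFun (p i / q i) := by
  rw [sum_congr rfl fun i hi => mul_klFun_div (hac i hi), sum_sub_distrib, sum_add_distrib, hpq]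
  ring

theorem sum_mul_log_div_nonneg (hp : ∀ i ∈ s, 0 ≤ p i) (hq : ∀ i ∈ s, 0 ≤ q i)
    (hpq : ∑ i ∈ s, p i = ∑ i ∈ s, q i) (hac : ∀ i ∈ s, q i = 0 → p i = 0) :
    0 ≤ ∑ i ∈ s, p i * log (p i / q i) := by
  rw [sum_mul_log_div_eq_sum_mul_klFun hpq hac]
  exact sum_nonneg fun i hi => mul_nonneg (hq i hi) (klFun_nonneg (div_nonneg (hp i hi) (hq i hi)))

theorem pinsker (hp : ∀ i ∈ s, 0 ≤ p i) (hq : ∀ i ∈ s, 0 ≤ q i)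
    (hpq : ∑ i ∈ s, p i = ∑ i ∈ s, q i) (hac : ∀ i ∈ s, q i = 0 → p i = 0) :
    (∑ i ∈ s, |p i - q i|) ^ 2 ≤ 2 * (∑ i ∈ s, q i) * ∑ i ∈ s, p i * log (p i / q i) := by
  have hCS : (∑ i ∈ s, |p i - q i|) ^ 2 ≤
      (∑ i ∈ s, 2 * (p i + 2 * q i) / 3) * ∑ i ∈ s, q i * klFun (p i / q i) := by
    refine sum_sq_le_sum_mul_sum_of_sq_le_mul s (fun i hi => ?_) (fun i hi => ?_) fun i hi => ?_
    · have := hp i hi; have := hq i hi; positivity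
    · exact mul_nonneg (hq i hi) (klFun_nonneg (div_nonneg (hp i hi) (hq i hi)))
    · rcases (hq i hi).eq_or_lt with hqi | hqi
      · simp [← hqi, hac i hi hqi.symm]
      · have := three_mul_sq_sub_le_mul_klFun_div (hp i hi) hqi
        rw [sq_abs]
        linarith
  have hweights : ∑ i ∈ s, 2 * (p i + 2 * q i) / 3 = 2 * ∑ i ∈ s, q i := by
    simp only [← sum_div, ← mul_sum, sum_add_distrib, hpq]
    ring
  rwa [hweights, ← sum_mul_log_div_eq_sum_mul_klFun hpq hac] at hCS

end Finset

structure IsJointPmfOn {𝒳 𝒴 : Type*} (A : Finset 𝒳) (B : Finset 𝒴) (p : 𝒳 → 𝒴 → ℝ)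
    (q : 𝒳 → ℝ) (r : 𝒴 → ℝ) : Prop where
  nonneg : ∀ x ∈ A, ∀ y ∈ B, 0 ≤ p x y
  sum_right : ∀ x ∈ A, ∑ y ∈ B, p x y = q x
  sum_left : ∀ y ∈ B, ∑ x ∈ A, p x y = r y
  sum_marginal : ∑ x ∈ A, q x = 1

namespace IsJointPmfOn

variable {𝒳 𝒴 : Type*} {A : Finset 𝒳} {B : Finset 𝒴} {p : 𝒳 → 𝒴 → ℝ} {q : 𝒳 → ℝ} {r : 𝒴 → ℝ}
  {x : 𝒳} {y : 𝒴}

theorem marginal_left_nonneg (h : IsJointPmfOn A B p q r) (hx : x ∈ A) : 0 ≤ q x :=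
  h.sum_right x hx ▸ sum_nonneg (h.nonneg x hx)

theorem marginal_right_nonneg (h : IsJointPmfOn A B p q r) (hy : y ∈ B) : 0 ≤ r y :=
  h.sum_left y hy ▸ sum_nonneg fun x hx => h.nonneg x hx y hy

theorem eq_zero_of_mul_marginal_eq_zero (h : IsJointPmfOn A B p q r) (hx : x ∈ A) (hy : y ∈ B)
    (hqr : q x * r y = 0) : p x y = 0 := by
  refine le_antisymm ?_ (h.nonneg x hx y hy)
  rcases mul_eq_zero.1 hqr with hq | hr
  · exact hq ▸ h.sum_right x hx ▸ single_le_sum (h.nonneg x hx) hy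
  · exact hr ▸ h.sum_left y hy ▸ single_le_sum (fun x' hx' => h.nonneg x' hx' y hy) hx

theorem sum_mul_marginal_right (h : IsJointPmfOn A B p q r) (y : 𝒴) :
    ∑ x ∈ A, q x * r y = r y := by
  rw [← sum_mul, h.sum_marginal, one_mul]

theorem fiber_kl_nonneg (h : IsJointPmfOn A B p q r) (hy : y ∈ B) :
    0 ≤ ∑ x ∈ A, p x y * log (p x y / (q x * r y)) :=
  sum_mul_log_div_nonneg (fun x hx => h.nonneg x hx y hy)
    (fun x hx => mul_nonneg (h.marginal_left_nonneg hx) (h.marginal_right_nonneg hy))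
    (by rw [h.sum_left y hy, h.sum_mul_marginal_right])
    fun x hx => h.eq_zero_of_mul_marginal_eq_zero hx hy

theorem mutualInfo_nonneg (h : IsJointPmfOn A B p q r) :
    0 ≤ ∑ x ∈ A, ∑ y ∈ B, p x y * log (p x y / (q x * r y)) := by
  rw [sum_comm]
  exact sum_nonneg fun y hy => h.fiber_kl_nonneg hy

theorem fiber_pinsker (h : IsJointPmfOn A B p q r) (hy : y ∈ B) :
    (∑ x ∈ A, |p x y - q x * r y|) ^ 2 ≤
      2 * r y * ∑ x ∈ A, p x y * log (p x y / (q x * r y)) := by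
  have := pinsker (fun x hx => h.nonneg x hx y hy)
    (fun x hx => mul_nonneg (h.marginal_left_nonneg hx) (h.marginal_right_nonneg hy))
    (by rw [h.sum_left y hy, h.sum_mul_marginal_right])
    fun x hx => h.eq_zero_of_mul_marginal_eq_zero hx hy
  rwa [h.sum_mul_marginal_right] at this

theorem sq_covariance_le (h : IsJointPmfOn A B p q r) {f : 𝒳 → ℝ}
    (hf : ∀ x ∈ A, q x ≠ 0 → |f x| ≤ 1) (g : 𝒴 → ℝ) :
    (∑ x ∈ A, ∑ y ∈ B, p x y * (f x * g y) - (∑ x ∈ A, q x * f x) * ∑ y ∈ B, r y * g y) ^ 2 ≤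
      (∑ y ∈ B, r y * g y ^ 2) * (2 * ∑ x ∈ A, ∑ y ∈ B, p x y * log (p x y / (q x * r y))) := by
  have hcov : ∑ x ∈ A, ∑ y ∈ B, p x y * (f x * g y) - (∑ x ∈ A, q x * f x) * ∑ y ∈ B, r y * g y =
      ∑ y ∈ B, g y * ∑ x ∈ A, (p x y - q x * r y) * f x := by
    simp_rw [sum_mul_sum, ← sum_sub_distrib, mul_sum]
    rw [sum_comm]
    exact sum_congr rfl fun y _ => sum_congr rfl fun x _ => by ring
  have hfiber : ∀ y ∈ B, |∑ x ∈ A, (p x y - q x * r y) * f x| ≤ ∑ x ∈ A, |p x y - q x * r y| :=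
    fun y hy => (abs_sum_le_sum_abs _ _).trans <| sum_le_sum fun x hx => by
      rw [abs_mul]
      by_cases hq : q x = 0
      · simp [hq, h.eq_zero_of_mul_marginal_eq_zero hx hy (by simp [hq])]
      · exact mul_le_of_le_one_right (abs_nonneg _) (hf x hx hq)
  calc _ = |∑ y ∈ B, g y * ∑ x ∈ A, (p x y - q x * r y) * f x| ^ 2 := by rw [hcov, sq_abs]
    _ ≤ (∑ y ∈ B, |g y| * ∑ x ∈ A, |p x y - q x * r y|) ^ 2 := by
      gcongr
      refine (abs_sum_le_sum_abs _ _).trans (sum_le_sum fun y hy => ?_)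
      rw [abs_mul]
      exact mul_le_mul_of_nonneg_left (hfiber y hy) (abs_nonneg _)
    _ ≤ (∑ y ∈ B, r y * g y ^ 2) * ∑ y ∈ B, 2 * ∑ x ∈ A, p x y * log (p x y / (q x * r y)) := by
      refine sum_sq_le_sum_mul_sum_of_sq_le_mul B
        (fun y hy => mul_nonneg (h.marginal_right_nonneg hy) (sq_nonneg _))
        (fun y hy => mul_nonneg zero_le_two (h.fiber_kl_nonneg hy)) fun y hy => ?_
      rw [mul_pow, sq_abs]
      exact (mul_le_mul_of_nonneg_left (h.fiber_pinsker hy) (sq_nonneg (g y))).trans_eq (by ring)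
    _ = _ := by rw [← mul_sum, sum_comm (s := B)]

end IsJointPmfOn

open Classical in
def pmfFin {Ω 𝒳 : Type*} [Fintype Ω] (μ : Ω → ℝ) (X : Ω → 𝒳) (x : 𝒳) : ℝ :=
  ∑ ω ∈ univ.filter (fun ω => X ω = x), μ ω

section FiniteSampleSpace

variable {Ω 𝒳 𝒴 : Type*} [Fintype Ω] {μ : Ω → ℝ}

open Classical in
theorem miFin_eq (μ : Ω → ℝ) (X : Ω → 𝒳) (Y : Ω → 𝒴) :
    miFin μ X Y = ∑ x ∈ univ.image X, ∑ y ∈ univ.image Y,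
      pmfFin μ (fun ω => (X ω, Y ω)) (x, y) *
        log (pmfFin μ (fun ω => (X ω, Y ω)) (x, y) / (pmfFin μ X x * pmfFin μ Y y)) := by
  simp only [miFin, pmfFin, Prod.mk.injEq]

theorem sum_mul_comp_eq_sum_pmfFin (μ : Ω → ℝ) (X : Ω → 𝒳) (f : 𝒳 → ℝ) {A : Finset 𝒳}
    (hA : ∀ ω, X ω ∈ A) : ∑ ω, μ ω * f (X ω) = ∑ x ∈ A, pmfFin μ X x * f x := by
  classical
  rw [← sum_fiberwise_of_maps_to (fun ω _ => hA ω)]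
  refine sum_congr rfl fun x _ => ?_
  rw [pmfFin, sum_mul]
  exact sum_congr (by congr) fun ω hω => by rw [(mem_filter.1 hω).2]

theorem sum_pmfFin_pair_right (μ : Ω → ℝ) (X : Ω → 𝒳) (Y : Ω → 𝒴) {B : Finset 𝒴}
    (hB : ∀ ω, Y ω ∈ B) (x : 𝒳) :
    ∑ y ∈ B, pmfFin μ (fun ω => (X ω, Y ω)) (x, y) = pmfFin μ X x := by
  classical
  rw [pmfFin, ← sum_fiberwise_of_maps_to (g := Y) fun ω _ => hB ω]
  refine sum_congr rfl fun y _ => ?_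
  rw [pmfFin, filter_filter]
  congr 1
  ext ω
  simp

theorem sum_pmfFin_pair_left (μ : Ω → ℝ) (X : Ω → 𝒳) (Y : Ω → 𝒴) {A : Finset 𝒳}
    (hA : ∀ ω, X ω ∈ A) (y : 𝒴) :
    ∑ x ∈ A, pmfFin μ (fun ω => (X ω, Y ω)) (x, y) = pmfFin μ Y y := by
  classical
  rw [pmfFin, ← sum_fiberwise_of_maps_to (g := X) fun ω _ => hA ω]
  refine sum_congr rfl fun x _ => ?_
  rw [pmfFin, filter_filter]
  congr 1
  ext ω
  simp [and_comm]

theorem exists_pos_of_pmfFin_ne_zero (hμ : ∀ ω, 0 ≤ μ ω) {X : Ω → 𝒳} {x : 𝒳}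
    (hx : pmfFin μ X x ≠ 0) : ∃ ω, X ω = x ∧ 0 < μ ω := by
  classical
  obtain ⟨ω, hω, hμω⟩ := exists_ne_zero_of_sum_ne_zero hx
  exact ⟨ω, (mem_filter.1 hω).2, (hμ ω).lt_of_ne' hμω⟩

open Classical in
theorem isJointPmfOn_pmfFin (hμ0 : ∀ ω, 0 ≤ μ ω) (hμ1 : ∑ ω, μ ω = 1) (X : Ω → 𝒳) (Y : Ω → 𝒴) :
    IsJointPmfOn (univ.image X) (univ.image Y) (fun x y => pmfFin μ (fun ω => (X ω, Y ω)) (x, y))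
      (pmfFin μ X) (pmfFin μ Y) where
  nonneg _ _ _ _ := sum_nonneg fun ω _ => hμ0 ω
  sum_right x _ := sum_pmfFin_pair_right μ X Y (fun ω => mem_image_of_mem Y (mem_univ ω)) x
  sum_left y _ := sum_pmfFin_pair_left μ X Y (fun ω => mem_image_of_mem X (mem_univ ω)) y
  sum_marginal := by
    simpa [hμ1] using (sum_mul_comp_eq_sum_pmfFin μ X (fun _ => 1)
      (fun ω => mem_image_of_mem X (mem_univ ω))).symm

end FiniteSampleSpace

theorem sub_sqrt_mul_sub_le {s b : ℝ} (hb : 0 ≤ b) : s - √(s * (s - b)) ≤ b := by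
  suffices s - b ≤ √(s * (s - b)) by linarith
  rcases le_or_gt b s with hbs | hbs
  · exact le_sqrt_of_sq_le (by nlinarith [mul_nonneg hb (sub_nonneg.2 hbs)])
  · exact (sub_neg.2 hbs).le.trans (sqrt_nonneg _)

theorem abs_sum_mul_mul_le_one {Ω : Type*} [Fintype Ω] {μ : Ω → ℝ} (hμ0 : ∀ ω, 0 ≤ μ ω)
    (hμ1 : ∑ ω, μ ω = 1) {X Y : Ω → ℝ} (hX : ∀ ω, 0 < μ ω → |X ω| ≤ 1)
    (hY : ∑ ω, μ ω * Y ω ^ 2 ≤ 1) : |∑ ω, μ ω * (X ω * Y ω)| ≤ 1 := by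
  have hX2 : ∑ ω, μ ω * X ω ^ 2 ≤ 1 := hμ1 ▸ sum_le_sum fun ω _ => by
    rcases (hμ0 ω).eq_or_lt with h0 | hpos
    · simp [← h0]
    · exact mul_le_of_le_one_right (hμ0 ω) ((sq_le_one_iff_abs_le_one _).2 (hX ω hpos))
  rw [← sq_le_one_iff_abs_le_one]
  calc (∑ ω, μ ω * (X ω * Y ω)) ^ 2 ≤ (∑ ω, μ ω * X ω ^ 2) * ∑ ω, μ ω * Y ω ^ 2 :=
        sum_sq_le_sum_mul_sum_of_sq_le_mul _ (fun ω _ => mul_nonneg (hμ0 ω) (sq_nonneg _))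
          (fun ω _ => mul_nonneg (hμ0 ω) (sq_nonneg _)) fun ω _ => le_of_eq (by ring)
    _ ≤ 1 := mul_le_one₀ hX2 (sum_nonneg fun ω _ => mul_nonneg (hμ0 ω) (sq_nonneg _)) hY

theorem coupling_pinsker_information_bound
    {Ω : Type*} [Fintype Ω] (μ : Ω → ℝ)
    (hμ0 : ∀ ω, 0 ≤ μ ω) (hμ1 : ∑ ω, μ ω = 1)
    (X Y : Ω → ℝ) (β : ℝ)
    -- `|X| ≤ 1` almost surely
    (hXbdd : ∀ ω, 0 < μ ω → |X ω| ≤ 1)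
    (hEX : ∑ ω, μ ω * X ω = 0)
    (hEY2 : ∑ ω, μ ω * (Y ω) ^ 2 ≤ 1)
    (hEXY : ∑ ω, μ ω * (X ω * Y ω) = β) :
    (∑ ω, μ ω * (X ω) ^ 2) -
        Real.sqrt ((∑ ω, μ ω * (X ω) ^ 2) * ((∑ ω, μ ω * (X ω) ^ 2) - β ^ 2)) ≤
      Real.sqrt (2 * miFin μ X Y) := by
  classical
  have hA : ∀ ω, X ω ∈ univ.image X := fun ω => mem_image_of_mem X (mem_univ ω)
  have hB : ∀ ω, Y ω ∈ univ.image Y := fun ω => mem_image_of_mem Y (mem_univ ω)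
  have hlaw := isJointPmfOn_pmfFin hμ0 hμ1 X Y
  have hbdd : ∀ x ∈ univ.image X, pmfFin μ X x ≠ 0 → |x| ≤ 1 := fun x _ hx => by
    obtain ⟨ω, rfl, hω⟩ := exists_pos_of_pmfFin_ne_zero hμ0 hx
    exact hXbdd ω hω
  have hmean : ∑ x ∈ univ.image X, pmfFin μ X x * x = 0 := by
    rw [← sum_mul_comp_eq_sum_pmfFin μ X (fun x => x) hA, hEX]
  have hsecond : ∑ y ∈ univ.image Y, pmfFin μ Y y * y ^ 2 ≤ 1 := by
    rwa [← sum_mul_comp_eq_sum_pmfFin μ Y (· ^ 2) hB]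
  have hcorr : ∑ x ∈ univ.image X, ∑ y ∈ univ.image Y,
      pmfFin μ (fun ω => (X ω, Y ω)) (x, y) * (x * y) = β := by
    rw [← sum_product' (f := fun x y => pmfFin μ (fun ω => (X ω, Y ω)) (x, y) * (x * y)),
      ← sum_mul_comp_eq_sum_pmfFin μ (fun ω => (X ω, Y ω)) (fun z => z.1 * z.2)
        fun ω => mem_product.2 ⟨hA ω, hB ω⟩, hEXY]
  have hβI : β ^ 2 ≤ 2 * miFin μ X Y := by
    have hcov := hlaw.sq_covariance_le hbdd (fun y => y)
    have hI := hlaw.mutualInfo_nonneg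
    rw [hcorr, hmean, zero_mul, sub_zero] at hcov
    rw [miFin_eq]
    exact hcov.trans (mul_le_of_le_one_left (by positivity) hsecond)
  calc _ ≤ β ^ 2 := sub_sqrt_mul_sub_le (sq_nonneg β)
    _ ≤ |β| := sq_abs β ▸ pow_le_of_le_one (abs_nonneg β)
        (hEXY ▸ abs_sum_mul_mul_le_one hμ0 hμ1 hXbdd hEY2) two_ne_zero
    _ ≤ √(2 * miFin μ X Y) := abs_le_sqrt hβI

end
end
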